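/- arXiv:2604.14042 — 7 statements merged into one kernel-verified Lean document; each statement's English description precedes it below -/
import Mathlib

section
/- Let t ≥ 2 be an integer and Λ > 1 a real number. Suppose that for every ε > 0 there exists V₀ such that for all integers V ≥ V₀ and U > V^t, every family c₀, …, c_{U−1} of unit vectors in ℂ^V satisfies max_{i≠j} |⟨c_i, c_j⟩| ≥ (Λ − ε)/√V. For each i ∈ ℕ let M_i, K_i, N_i be positive integers and let S_i be an indexed family of M_i complex K_i × N_i matrices, each of total energy K_i N_i, with maximum correlation magnitude δ_i. Assume K_i N_i → ∞ as i → ∞ and δ_i/√(K_i N_i) → ρ for some real ρ with 0 ≤ ρ < Λ. Then there exists i₀ such that M_i ≤ K_i^t · N_i^{t−1} for all i ≥ i₀. -/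
open Finset Filter

/-- Periodic correlation of two complex `K × N` matrices (columns indexed by `ZMod N`)
at shift `τ`: `R_{S,S'}(τ) = ∑_k ∑_t s_{k,t} ⋅ conj (s'_{k,t+τ})`. -/
noncomputable def qcssCorr {K N : ℕ} [NeZero N] (S S' : Fin K → ZMod N → ℂ) (τ : ZMod N) : ℂ :=
  ∑ k : Fin K, ∑ t : ZMod N, S k t * (starRingEnd ℂ) (S' k (t + τ))

/-- Maximum correlation magnitude of an indexed family of `M` complex `K × N` matrices:
the supremum of `|R_{S^m,S^{m'}}(τ)|` over all `(m,τ) ≠ (m',0)`. -/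
noncomputable def qcssDeltaMax {M K N : ℕ} [NeZero N] (S : Fin M → Fin K → ZMod N → ℂ) : ℝ :=
  sSup {x : ℝ | ∃ m m' : Fin M, ∃ τ : ZMod N,
    (m, τ) ≠ (m', 0) ∧ x = ‖qcssCorr (S m) (S m') τ‖}

noncomputable def idxEquiv (A B : ℕ) [NeZero B] : (Fin A × ZMod B) ≃ Fin (A * B) :=
  Fintype.equivOfCardEq (by simp [ZMod.card])

/-- shifted energy equals energy -/
lemma shift_energy {K N : ℕ} [NeZero N] (f : Fin K → ZMod N → ℂ) (τ : ZMod N) :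
    ∑ k : Fin K, ∑ s : ZMod N, ‖f k (s + τ)‖ ^ 2
      = ∑ k : Fin K, ∑ s : ZMod N, ‖f k s‖ ^ 2 := by
  refine Finset.sum_congr rfl fun k _ => ?_
  exact Fintype.sum_equiv (Equiv.addRight τ) _ _ (fun s => rfl)

/-- every correlation magnitude is at most the total energy bound -/
lemma corr_le {M K N : ℕ} [NeZero N] (S : Fin M → Fin K → ZMod N → ℂ) (E : ℝ)
    (hE : ∀ m, ∑ k : Fin K, ∑ τ : ZMod N, ‖S m k τ‖ ^ 2 = E)
    (m m' : Fin M) (τ : ZMod N) :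
    ‖qcssCorr (S m) (S m') τ‖ ≤ E := by
  have h1 : ‖qcssCorr (S m) (S m') τ‖ ≤
      ∑ k : Fin K, ∑ s : ZMod N,
        ‖S m k s‖ * ‖S m' k (s + τ)‖ := by
    refine (norm_sum_le _ _).trans ?_
    gcongr with k _
    refine (norm_sum_le _ _).trans ?_
    gcongr with s _
    simp [norm_mul]
  have h2 : ∑ k : Fin K, ∑ s : ZMod N,
        ‖S m k s‖ * ‖S m' k (s + τ)‖ ≤
      ∑ k : Fin K, ∑ s : ZMod N,
        (‖S m k s‖ ^ 2 + ‖S m' k (s + τ)‖ ^ 2) / 2 := by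
    gcongr with k _ s _
    nlinarith [sq_nonneg (‖S m k s‖ - ‖S m' k (s + τ)‖)]
  have h3 : ∑ k : Fin K, ∑ s : ZMod N,
        (‖S m k s‖ ^ 2 + ‖S m' k (s + τ)‖ ^ 2) / 2 = E := by
    have hsh := shift_energy (S m') τ
    simp only [add_div, Finset.sum_add_distrib, ← Finset.sum_div]
    rw [hE m, hsh, hE m']
    ring
  calc ‖qcssCorr (S m) (S m') τ‖ ≤ _ := h1
    _ ≤ _ := h2
    _ = E := h3

lemma corr_shift {K N : ℕ} [NeZero N] (f g : Fin K → ZMod N → ℂ) (τ τ' : ZMod N) :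
    ∑ k : Fin K, ∑ s : ZMod N, f k (s + τ) * (starRingEnd ℂ) (g k (s + τ'))
      = qcssCorr f g (τ' - τ) := by
  unfold qcssCorr
  refine Finset.sum_congr rfl fun k _ => ?_
  refine Fintype.sum_equiv (Equiv.addRight τ) _ _ fun s => ?_
  simp only [Equiv.coe_addRight]
  rw [show s + τ + (τ' - τ) = s + τ' by ring]

noncomputable def qcssCode {M K N : ℕ} [NeZero N] (S : Fin M → Fin K → ZMod N → ℂ) :
    Fin (M * N) → Fin (K * N) → ℂ :=
  fun u v =>
    (((Real.sqrt ((K : ℝ) * N))⁻¹ : ℝ) : ℂ) *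
      S ((idxEquiv M N).symm u).1 ((idxEquiv K N).symm v).1
        (((idxEquiv K N).symm v).2 + ((idxEquiv M N).symm u).2)

lemma qcssCode_norm {M K N : ℕ} [NeZero N] (S : Fin M → Fin K → ZMod N → ℂ)
    (hK : 0 < K)
    (hE : ∀ m, ∑ k : Fin K, ∑ τ : ZMod N, ‖S m k τ‖ ^ 2 = (K : ℝ) * N)
    (u : Fin (M * N)) :
    ∑ v, ‖qcssCode S u v‖ ^ 2 = 1 := by
  have hNpos : 0 < N := Nat.pos_of_ne_zero (NeZero.ne N)
  have hVpos : (0 : ℝ) < (K : ℝ) * N := by positivity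
  have hsum : ∑ v : Fin (K * N), ‖qcssCode S u v‖ ^ 2
      = ∑ p : Fin K × ZMod N, ‖qcssCode S u (idxEquiv K N p)‖ ^ 2 :=
    (Fintype.sum_equiv (idxEquiv K N) _ _ (fun p => rfl)).symm
  rw [hsum]
  simp only [qcssCode, Equiv.symm_apply_apply, norm_mul, Complex.norm_real, Real.norm_eq_abs, mul_pow,
    Fintype.sum_prod_type]
  simp only [← Finset.mul_sum]
  rw [shift_energy (S ((idxEquiv M N).symm u).1) (((idxEquiv M N).symm u).2), hE,
    abs_of_nonneg (by positivity : (0:ℝ) ≤ (Real.sqrt ((K:ℝ)*N))⁻¹), inv_pow,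
    Real.sq_sqrt hVpos.le, inv_mul_cancel₀ hVpos.ne']

lemma qcssCode_inner {M K N : ℕ} [NeZero N] (S : Fin M → Fin K → ZMod N → ℂ)
    (u u' : Fin (M * N)) :
    ∑ v, qcssCode S u v * (starRingEnd ℂ) (qcssCode S u' v)
      = (((Real.sqrt ((K : ℝ) * N))⁻¹ ^ 2 : ℝ) : ℂ) *
          qcssCorr (S ((idxEquiv M N).symm u).1) (S ((idxEquiv M N).symm u').1)
            (((idxEquiv M N).symm u').2 - ((idxEquiv M N).symm u).2) := by
  have hsum : ∑ v : Fin (K * N), qcssCode S u v * (starRingEnd ℂ) (qcssCode S u' v)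
      = ∑ p : Fin K × ZMod N,
          qcssCode S u (idxEquiv K N p) * (starRingEnd ℂ) (qcssCode S u' (idxEquiv K N p)) :=
    (Fintype.sum_equiv (idxEquiv K N) _ _ (fun p => rfl)).symm
  rw [hsum, ← corr_shift (S ((idxEquiv M N).symm u).1) (S ((idxEquiv M N).symm u').1)
    (((idxEquiv M N).symm u).2) (((idxEquiv M N).symm u').2)]
  simp only [qcssCode, Equiv.symm_apply_apply, map_mul, Complex.conj_ofReal,
    Fintype.sum_prod_type, ← Finset.mul_sum, Finset.mul_sum]
  refine Finset.sum_congr rfl fun k _ => Finset.sum_congr rfl fun s _ => ?_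
  push_cast
  ring

/-- **Geometry-to-Scalability Transfer Principle.** Suppose every sufficiently
high-dimensional unit-norm codebook in `ℂ^V` with more than `V^t` codewords has maximum
inner-product magnitude at least `(Λ - ε)/√V`.  Then every sequence of QCSSs whose
normalized maximum correlation `δ_i/√(K_i N_i)` tends to some `ρ < Λ` eventually
satisfies `M_i ≤ K_i^t ⋅ N_i^{t-1}`. -/
theorem geometry_to_scalability_transfer
    (t : ℕ) (ht : 2 ≤ t) (Λ : ℝ) (hΛ : 1 < Λ)
    (hcode : ∀ ε : ℝ, 0 < ε → ∃ V₀ : ℕ, ∀ V : ℕ, V₀ ≤ V → ∀ U : ℕ, V ^ t < U →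
      ∀ c : Fin U → Fin V → ℂ,
        (∀ i, ∑ j, ‖c i j‖ ^ 2 = 1) →
        ∃ i j : Fin U, i ≠ j ∧
          (Λ - ε) / Real.sqrt V ≤
            ‖∑ v, c i v * (starRingEnd ℂ) (c j v)‖)
    (M K N : ℕ → ℕ)
    (hM : ∀ i, 0 < M i) (hK : ∀ i, 0 < K i) [hN : ∀ i, NeZero (N i)]
    (S : ∀ i : ℕ, Fin (M i) → Fin (K i) → ZMod (N i) → ℂ)
    (henergy : ∀ i, ∀ m : Fin (M i),
      ∑ k : Fin (K i), ∑ τ : ZMod (N i), ‖S i m k τ‖ ^ 2 = (K i : ℝ) * N i)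
    (δ : ℕ → ℝ) (hδ : ∀ i, δ i = qcssDeltaMax (S i))
    (hKN : Tendsto (fun i => ((K i : ℝ) * N i)) atTop atTop)
    (ρ : ℝ) (hρ0 : 0 ≤ ρ) (hρΛ : ρ < Λ)
    (hlim : Tendsto (fun i => δ i / Real.sqrt ((K i : ℝ) * N i)) atTop (nhds ρ)) :
    ∃ i₀ : ℕ, ∀ i : ℕ, i₀ ≤ i → M i ≤ K i ^ t * N i ^ (t - 1) := by
  set ε : ℝ := (Λ - ρ) / 2 with hεdef
  have hε : 0 < ε := by simp only [hεdef]; linarith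
  obtain ⟨V₀, hV₀⟩ := hcode ε hε
  have h1 : ∀ᶠ i in atTop, δ i / Real.sqrt ((K i : ℝ) * N i) < Λ - ε :=
    hlim.eventually_lt_const (by simp only [hεdef]; linarith)
  have h2 : ∀ᶠ i in atTop, (V₀ : ℝ) ≤ (K i : ℝ) * N i := hKN.eventually_ge_atTop _
  obtain ⟨i₀, hi₀⟩ := (h1.and h2).exists_forall_of_atTop
  refine ⟨i₀, fun i hi => ?_⟩
  obtain ⟨hsmall, hbig⟩ := hi₀ i hi
  by_contra hMi
  push_neg at hMi
  have hNpos : 0 < N i := Nat.pos_of_ne_zero (NeZero.ne (N i))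
  have hVpos : (0 : ℝ) < (K i : ℝ) * N i := by
    have := hK i
    positivity
  have hVle : V₀ ≤ K i * N i := by
    have : (V₀ : ℝ) ≤ ((K i * N i : ℕ) : ℝ) := by push_cast; exact hbig
    exact_mod_cast this
  have hUV : (K i * N i) ^ t < M i * N i := by
    have hN' : N i ^ t = N i ^ (t - 1) * N i := by
      rw [← pow_succ]
      congr 1
      omega
    have h3 : (K i * N i) ^ t = K i ^ t * N i ^ (t - 1) * N i := by
      rw [mul_pow, hN', ← mul_assoc]
    rw [h3]
    exact (Nat.mul_lt_mul_right hNpos).mpr hMi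
  obtain ⟨a, b, hab, hge⟩ := hV₀ (K i * N i) hVle (M i * N i) hUV (qcssCode (S i))
    (qcssCode_norm (S i) (hK i) (henergy i))
  -- decode indices
  set m := ((idxEquiv (M i) (N i)).symm a).1
  set τ := ((idxEquiv (M i) (N i)).symm a).2
  set m' := ((idxEquiv (M i) (N i)).symm b).1
  set τ' := ((idxEquiv (M i) (N i)).symm b).2
  have hne : (m, τ' - τ) ≠ (m', (0 : ZMod (N i))) := by
    intro h
    apply hab
    have h1 : m = m' := (Prod.ext_iff.mp h).1
    have h2 : τ' - τ = 0 := (Prod.ext_iff.mp h).2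
    have h3 : τ = τ' := (sub_eq_zero.mp h2).symm
    have : (idxEquiv (M i) (N i)).symm a = (idxEquiv (M i) (N i)).symm b :=
      Prod.ext (by exact h1) (by exact h3)
    exact (idxEquiv (M i) (N i)).symm.injective this
  -- bound the correlation by δ
  have hbdd : BddAbove {x : ℝ | ∃ m m' : Fin (M i), ∃ τ : ZMod (N i),
      (m, τ) ≠ (m', 0) ∧ x = ‖qcssCorr (S i m) (S i m') τ‖} := by
    refine ⟨(K i : ℝ) * N i, fun x hx => ?_⟩
    obtain ⟨p, q, σ, -, hx⟩ := hx
    rw [hx]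
    exact corr_le (S i) _ (henergy i) p q σ
  have hδge : ‖qcssCorr (S i m) (S i m') (τ' - τ)‖ ≤ δ i := by
    rw [hδ, qcssDeltaMax]
    exact le_csSup hbdd ⟨m, m', τ' - τ, hne, rfl⟩
  -- compute magnitude of inner product
  have hinner : ‖∑ v, qcssCode (S i) a v * (starRingEnd ℂ) (qcssCode (S i) b v)‖
      = ((K i : ℝ) * N i)⁻¹ * ‖qcssCorr (S i m) (S i m') (τ' - τ)‖ := by
    rw [qcssCode_inner, norm_mul, Complex.norm_real, Real.norm_eq_abs, inv_pow, Real.sq_sqrt hVpos.le,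
      abs_of_nonneg (by positivity)]
  have hsq : Real.sqrt ((K i : ℝ) * N i) > 0 := Real.sqrt_pos.mpr hVpos
  have hcast : ((K i * N i : ℕ) : ℝ) = (K i : ℝ) * N i := by push_cast; ring
  rw [hinner, hcast] at hge
  have hfinal : Λ - ε ≤ δ i / Real.sqrt ((K i : ℝ) * N i) := by
    have hmul : (Λ - ε) / Real.sqrt ((K i : ℝ) * N i)
        ≤ (δ i / Real.sqrt ((K i : ℝ) * N i)) / Real.sqrt ((K i : ℝ) * N i) := by
      calc (Λ - ε) / Real.sqrt ((K i : ℝ) * N i)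
          ≤ ((K i : ℝ) * N i)⁻¹ * ‖qcssCorr (S i m) (S i m') (τ' - τ)‖ := hge
        _ ≤ ((K i : ℝ) * N i)⁻¹ * δ i := by
            exact mul_le_mul_of_nonneg_left hδge (by positivity)
        _ = (δ i / Real.sqrt ((K i : ℝ) * N i)) / Real.sqrt ((K i : ℝ) * N i) := by
            rw [div_div, Real.mul_self_sqrt hVpos.le]
            ring
    exact (div_le_div_iff_of_pos_right hsq).mp hmul
  linarith
end

section
/- Let p ≥ 5 be a prime, n ≥ 1, q = p^{2n}, F_q the finite field with q elements, g a generator of F_q^*, χ : F_q → ℂ a nontrivial additive character, Q an integer with Q | q−1 and 1 < Q < q−1, N = (q−1)/Q, and H_Q the subgroup of F_q^* of order Q. For (α, β, η) ∈ F_q × F_q × H_Q let S^{α,β,η} be the Q × N complex matrix with entries s^{α,β,η}_{k,t} = χ(α g^{3(kN+t)} + β g^{2(kN+t)} + η g^{kN+t}) for 0 ≤ k ≤ Q−1 and 0 ≤ t ≤ N−1. Then the map (α, β, η) ↦ S^{α,β,η} is injective; in particular, the set {S^{α,β,η} : α, β ∈ F_q, η ∈ H_Q} consists of exactly p^{4n}·Q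 distinct matrices. -/
open Finset

/-- The matrix `S^{α,β,η}` of Construction 1: a `Q × N` complex matrix with entries
`s_{k,t} = χ(α g^{3(kN+t)} + β g^{2(kN+t)} + η g^{kN+t})`. -/
noncomputable def construction1Matrix {F : Type} [Field F] (χ : F → ℂ) (g : Fˣ)
    (Q N : ℕ) (α β : F) (η : Fˣ) : Fin Q → Fin N → ℂ :=
  fun k t =>
    χ (α * (g : F) ^ (3 * ((k : ℕ) * N + (t : ℕ))) +
       β * (g : F) ^ (2 * ((k : ℕ) * N + (t : ℕ))) +
       (η : F) * (g : F) ^ ((k : ℕ) * N + (t : ℕ)))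

/-- If a cubic polynomial with zero constant term lands entirely in the kernel of a
nontrivial additive character (and 2, 6 are invertible), its coefficients vanish. -/
lemma cubic_coeffs_zero {F : Type} [Field F] (χ : F → ℂ)
    (hχadd : ∀ x y : F, χ (x + y) = χ x * χ y)
    (hχabs : ∀ x : F, ‖χ x‖ = 1)
    (hχnt : ∃ x : F, χ x ≠ 1)
    (h2 : (2 : F) ≠ 0) (h6 : (6 : F) ≠ 0)
    (a b c : F) (h : ∀ x : F, χ (a * x ^ 3 + b * x ^ 2 + c * x) = 1) :
    a = 0 ∧ b = 0 ∧ c = 0 := by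
  have hne : ∀ x : F, χ x ≠ 0 := by
    intro x hx
    have := hχabs x
    rw [hx] at this; simp at this
  have χ0 : χ 0 = 1 := by
    have h00 : χ 0 = χ 0 * χ 0 := by
      have := hχadd 0 0; simpa using this
    have := hne 0
    field_simp at h00
    tauto
  have hker_add : ∀ s t : F, χ s = 1 → χ t = 1 → χ (s + t) = 1 := by
    intro s t hs ht; rw [hχadd, hs, ht, mul_one]
  have hker_neg : ∀ s : F, χ s = 1 → χ (-s) = 1 := by
    intro s hs
    have h1 : χ (s + -s) = χ s * χ (-s) := hχadd s (-s)
    rw [add_neg_cancel, χ0, hs, one_mul] at h1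
    exact h1.symm
  have chi_triv : ∀ c0 : F, (∀ x : F, χ (c0 * x) = 1) → c0 = 0 := by
    intro c0 hc0
    by_contra hc
    obtain ⟨x, hx⟩ := hχnt
    have := hc0 (c0⁻¹ * x)
    rw [mul_inv_cancel_left₀ hc] at this
    exact hx this
  -- first difference
  have key : ∀ x y : F, χ (3 * a * x ^ 2 * y + 3 * a * x * y ^ 2 + 2 * b * x * y) = 1 := by
    intro x y
    have e : 3 * a * x ^ 2 * y + 3 * a * x * y ^ 2 + 2 * b * x * y =
        (a * (x + y) ^ 3 + b * (x + y) ^ 2 + c * (x + y)) +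
        -(a * x ^ 3 + b * x ^ 2 + c * x) + -(a * y ^ 3 + b * y ^ 2 + c * y) := by ring
    rw [e]
    exact hker_add _ _ (hker_add _ _ (h _) (hker_neg _ (h _))) (hker_neg _ (h _))
  -- second difference
  have key2 : ∀ x y : F, χ (6 * a * x * y) = 1 := by
    intro x y
    have e : 6 * a * x * y =
        (3 * a * (x + y) ^ 2 * 1 + 3 * a * (x + y) * 1 ^ 2 + 2 * b * (x + y) * 1) +
        -(3 * a * x ^ 2 * 1 + 3 * a * x * 1 ^ 2 + 2 * b * x * 1) +
        -(3 * a * y ^ 2 * 1 + 3 * a * y * 1 ^ 2 + 2 * b * y * 1) := by ring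
    rw [e]
    exact hker_add _ _ (hker_add _ _ (key _ _) (hker_neg _ (key _ _))) (hker_neg _ (key _ _))
  have ha6 : 6 * a = 0 := by
    apply chi_triv
    intro x
    have := key2 x 1
    simpa using this
  have ha : a = 0 := by
    rcases mul_eq_zero.1 ha6 with h' | h'
    · exact absurd h' h6
    · exact h'
  have hb2 : 2 * b = 0 := by
    apply chi_triv
    intro x
    have := key x 1
    rw [ha] at this
    have e : 2 * b * x = 3 * 0 * x ^ 2 * 1 + 3 * 0 * x * 1 ^ 2 + 2 * b * x * 1 := by ring
    rw [e]; exact this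
  have hb : b = 0 := by
    rcases mul_eq_zero.1 hb2 with h' | h'
    · exact absurd h' h2
    · exact h'
  have hc : c = 0 := by
    apply chi_triv
    intro x
    have := h x
    rw [ha, hb] at this
    have e : c * x = 0 * x ^ 3 + 0 * x ^ 2 + c * x := by ring
    rw [e]; exact this
  exact ⟨ha, hb, hc⟩

/-- **Injectivity of Construction 1.** For `q = p^{2n}`, `p ≥ 5` prime, the map
`(α, β, η) ↦ S^{α,β,η}` (with `α, β ∈ F_q` and `η` in the subgroup `H_Q` of order `Q`)
is injective; in particular the set `{S^{α,β,η}}` consists of exactly `p^{4n}·Q`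
distinct matrices. -/
theorem construction1_injective
    (p n : ℕ) (hp : p.Prime) (hp5 : 5 ≤ p) (hn : 1 ≤ n)
    (F : Type) [Field F] [Fintype F] (hF : Fintype.card F = p ^ (2 * n))
    (g : Fˣ) (hg : ∀ x : Fˣ, x ∈ Subgroup.zpowers g)
    (χ : F → ℂ)
    (hχadd : ∀ x y : F, χ (x + y) = χ x * χ y)
    (hχabs : ∀ x : F, ‖χ x‖ = 1)
    (hχnt : ∃ x : F, χ x ≠ 1)
    (Q : ℕ) (hQdvd : Q ∣ p ^ (2 * n) - 1) (hQ1 : 1 < Q) (hQ2 : Q < p ^ (2 * n) - 1)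
    (N : ℕ) (hN : N = (p ^ (2 * n) - 1) / Q) :
    Function.Injective
      (fun x : F × F × {η : Fˣ // ∃ j : ℕ, j < Q ∧ η = g ^ (N * j)} =>
        construction1Matrix χ g Q N x.1 x.2.1 (x.2.2 : Fˣ))
    ∧ Nat.card (Set.range
        (fun x : F × F × {η : Fˣ // ∃ j : ℕ, j < Q ∧ η = g ^ (N * j)} =>
          construction1Matrix χ g Q N x.1 x.2.1 (x.2.2 : Fˣ)))
      = p ^ (4 * n) * Q := by
  classical
  -- characteristic of F is p
  have hCharP : CharP F (ringChar F) := ringChar.charP F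
  obtain ⟨m, hrprime, hcard⟩ := FiniteField.card F (ringChar F)
  have hrp : ringChar F = p := by
    have hdvd : p ∣ (ringChar F) ^ (m : ℕ) := by
      rw [← hcard, hF]
      exact dvd_pow_self p (by omega)
    have := hp.dvd_of_dvd_pow hdvd
    exact ((Nat.prime_dvd_prime_iff_eq hp hrprime).1 this).symm
  have hpF : CharP F p := hrp ▸ hCharP
  have hcast : ∀ k : ℕ, (k : F) = 0 ↔ p ∣ k := fun k => CharP.cast_eq_zero_iff F p k
  have h2 : (2 : F) ≠ 0 := by
    intro h
    have : p ∣ 2 := by rw [← hcast 2]; exact_mod_cast h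
    have := Nat.le_of_dvd (by norm_num) this
    omega
  have h6 : (6 : F) ≠ 0 := by
    intro h
    have hd : p ∣ 6 := by rw [← hcast 6]; exact_mod_cast h
    have := Nat.le_of_dvd (by norm_num) hd
    interval_cases p
    · exact absurd hd (by decide)
    · exact absurd hp (by decide)
  have hχne : ∀ x : F, χ x ≠ 0 := by
    intro x hx
    have := hχabs x; rw [hx] at this; simp at this
  have χ0 : χ 0 = 1 := by
    have h00 : χ 0 = χ 0 * χ 0 := by simpa using hχadd 0 0
    have := hχne 0
    field_simp at h00
    tauto
  -- basic numerics
  set q : ℕ := p ^ (2 * n) with hq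
  have hq1 : 2 < q - 1 := lt_of_le_of_lt hQ1 hQ2
  have horder : orderOf g = q - 1 := by
    rw [orderOf_eq_card_of_forall_mem_zpowers hg, Nat.card_eq_fintype_card, Fintype.card_units, hF]
  have hQN : Q * N = q - 1 := by
    rw [hN]; exact Nat.mul_div_cancel' hQdvd
  have hNpos : 0 < N := by
    rcases Nat.eq_zero_or_pos N with h | h
    · rw [h, mul_zero] at hQN; omega
    · exact h
  -- injectivity
  have hinj : Function.Injective
      (fun x : F × F × {η : Fˣ // ∃ j : ℕ, j < Q ∧ η = g ^ (N * j)} =>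
        construction1Matrix χ g Q N x.1 x.2.1 (x.2.2 : Fˣ)) := by
    rintro ⟨α₁, β₁, η₁⟩ ⟨α₂, β₂, η₂⟩ hEq
    simp only at hEq
    -- entrywise equality gives equality of χ-values on all units
    have hunit : ∀ u : Fˣ,
        χ (α₁ * (u : F) ^ 3 + β₁ * (u : F) ^ 2 + ((η₁ : Fˣ) : F) * (u : F)) =
        χ (α₂ * (u : F) ^ 3 + β₂ * (u : F) ^ 2 + ((η₂ : Fˣ) : F) * (u : F)) := by
      intro u
      obtain ⟨m, hm⟩ := (mem_powers_iff_mem_zpowers).2 (hg u)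
      -- reduce exponent mod q-1
      set m' := m % (q - 1) with hm'
      have hm'lt : m' < q - 1 := Nat.mod_lt _ (by omega)
      have hm2 : g ^ m = u := hm
      have hgu : g ^ m' = u := by
        rw [hm', ← horder, pow_mod_orderOf, hm2]
      set k := m' / N with hk
      set t := m' % N with ht
      have htlt : t < N := Nat.mod_lt _ hNpos
      have hklt : k < Q := by
        rw [hk, Nat.div_lt_iff_lt_mul hNpos]
        omega
      have hkNt : k * N + t = m' := by
        rw [hk, ht, Nat.mul_comm]
        exact Nat.div_add_mod m' N
      have := congrFun (congrFun hEq ⟨k, hklt⟩) ⟨t, htlt⟩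
      simp only [construction1Matrix] at this
      have hgF : (g : F) ^ m' = (u : F) := by
        rw [← hgu]; push_cast; ring
      rw [hkNt] at this
      rw [pow_mul', pow_mul', hgF] at this
      exact this
    -- so χ of the difference polynomial is 1 everywhere
    set a := α₁ - α₂
    set b := β₁ - β₂
    set c := ((η₁ : Fˣ) : F) - ((η₂ : Fˣ) : F)
    have hker : ∀ x : F, χ (a * x ^ 3 + b * x ^ 2 + c * x) = 1 := by
      intro x
      rcases eq_or_ne x 0 with rfl | hx
      · simpa using χ0
      · set u : Fˣ := Units.mk0 x hx with hu
        have hux : (u : F) = x := rfl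
        have h1 := hunit u
        rw [hux] at h1
        have hsplit : χ (α₁ * x ^ 3 + β₁ * x ^ 2 + ((η₁ : Fˣ) : F) * x) =
            χ (a * x ^ 3 + b * x ^ 2 + c * x) *
            χ (α₂ * x ^ 3 + β₂ * x ^ 2 + ((η₂ : Fˣ) : F) * x) := by
          rw [← hχadd]
          congr 1
          simp only [a, b, c]
          ring
        rw [hsplit] at h1
        exact mul_right_cancel₀ (hχne _) (by rw [one_mul]; exact h1)
    obtain ⟨ha, hb, hc⟩ := cubic_coeffs_zero χ hχadd hχabs hχnt h2 h6 a b c hker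
    have hα : α₁ = α₂ := sub_eq_zero.1 ha
    have hβ : β₁ = β₂ := sub_eq_zero.1 hb
    have hη : η₁ = η₂ := by
      apply Subtype.ext
      apply Units.ext
      exact sub_eq_zero.1 hc
    rw [hα, hβ, hη]
  refine ⟨hinj, ?_⟩
  rw [Nat.card_range_of_injective hinj]
  -- cardinality of the subgroup-like subtype
  have hHcard : Nat.card {η : Fˣ // ∃ j : ℕ, j < Q ∧ η = g ^ (N * j)} = Q := by
    have hbij : Function.Bijective
        (fun j : Fin Q => (⟨g ^ (N * (j : ℕ)), ⟨j, j.2, rfl⟩⟩ :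
          {η : Fˣ // ∃ j : ℕ, j < Q ∧ η = g ^ (N * j)})) := by
      constructor
      · intro j₁ j₂ hj
        have h' : g ^ (N * (j₁ : ℕ)) = g ^ (N * (j₂ : ℕ)) := congrArg Subtype.val hj
        have h₁ : N * (j₁ : ℕ) < orderOf g := by
          rw [horder]
          calc N * (j₁ : ℕ) < N * Q := mul_lt_mul_of_pos_left j₁.2 hNpos
            _ = q - 1 := by rw [Nat.mul_comm]; exact hQN
        have h₂ : N * (j₂ : ℕ) < orderOf g := by
          rw [horder]
          calc N * (j₂ : ℕ) < N * Q := mul_lt_mul_of_pos_left j₂.2 hNpos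
            _ = q - 1 := by rw [Nat.mul_comm]; exact hQN
        have := pow_injOn_Iio_orderOf h₁ h₂ h'
        have : (j₁ : ℕ) = (j₂ : ℕ) := by
          exact Nat.eq_of_mul_eq_mul_left hNpos this
        exact Fin.ext this
      · rintro ⟨η, j, hj, rfl⟩
        exact ⟨⟨j, hj⟩, rfl⟩
    have := Nat.card_eq_of_bijective _ hbij
    simpa using this.symm
  rw [Nat.card_prod, Nat.card_prod, hHcard, Nat.card_eq_fintype_card, hF]
  rw [← mul_assoc, ← pow_add]
  congr 2
  omega
end

section
/- Let p be a prime, n ≥ 1, q = p^{2n}, F_q the finite field with q elements, g a generator of F_q^*, ψ a multiplicative character of F_q of order Δ with Δ | q−1 and Δ > 1, and ψ₁ its extension with ψ₁(0) = 1. Let Q be an integer with Q | q−1 and 1 < Q < q−1, N = (q−1)/Q, and H_Q the subgroup of F_q^* of order Q. Then for all integers r₁, r₂ with 1 ≤ r₁, r₂ ≤ Δ−1, all η₁, η₂ ∈ H_Q, and every integer τ with 0 ≤ τ ≤ N−1 such that the conditions r₁ = r₂, η₁ = η₂ and τ = 0 do not all hold simultaneously, one has |Σ_{y=0}^{q−2}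 ψ₁(g^{y} + η₁)^{r₁} · conj(ψ₁(g^{y+τ} + η₂)^{r₂})| ≤ p^{n} + 3. -/
open Finset

private lemma aux_reindex {F : Type} [Field F] [Fintype F] [DecidableEq F]
    (g : Fˣ) (hg : ∀ x : Fˣ, x ∈ Subgroup.zpowers g)
    (f : F → ℂ) :
    ∑ y ∈ Finset.range (Fintype.card F - 1), f ((g : F) ^ y) =
      ∑ x ∈ Finset.univ.erase (0 : F), f x := by
  have hcard : Fintype.card Fˣ = Fintype.card F - 1 := Fintype.card_units (α := F)
  have hog : orderOf g = Fintype.card F - 1 := by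
    rw [orderOf_eq_card_of_forall_mem_zpowers hg, Nat.card_eq_fintype_card, hcard]
  refine Finset.sum_bij (fun y _ => (g : F) ^ y) ?_ ?_ ?_ ?_
  · intro y _
    refine Finset.mem_erase.mpr ⟨?_, Finset.mem_univ _⟩
    show (g : F) ^ y ≠ 0
    rw [← Units.val_pow_eq_pow_val]
    exact Units.ne_zero _
  · intro y₁ h₁ y₂ h₂ h
    have h' : g ^ y₁ = g ^ y₂ := Units.ext (by simpa [Units.val_pow_eq_pow_val] using h)
    exact pow_injOn_Iio_orderOf (by simpa [hog] using Finset.mem_range.mp h₁)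
      (by simpa [hog] using Finset.mem_range.mp h₂) h'
  · intro x hx
    have hx0 : x ≠ 0 := (Finset.mem_erase.mp hx).1
    obtain ⟨u, rfl⟩ := isUnit_iff_ne_zero.mpr hx0
    obtain ⟨m, hm⟩ := mem_powers_iff_mem_zpowers.mpr (hg u)
    have hopos : 0 < orderOf g := by
      rw [hog, hcard.symm]
      exact Fintype.card_pos
    refine ⟨m % orderOf g, Finset.mem_range.mpr ?_, ?_⟩
    · rw [← hog]; exact Nat.mod_lt _ hopos
    · show (g : F) ^ (m % orderOf g) = (u : F)
      have hm' : g ^ m = u := hm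
      rw [← Units.val_pow_eq_pow_val, pow_mod_orderOf, hm']
  · intro y _; rfl

set_option maxHeartbeats 1000000 in
/-- **Correlation bound for Construction 4** (purely multiplicative-character QCSS).
For `q = p^{2n}`, a generator `g` of `F_q^*`, a multiplicative character `ψ` of order
`Δ` (extended by `ψ₁(0) = 1`), `η₁, η₂` in the subgroup `H_Q` of order `Q`, and
`0 ≤ τ ≤ N−1` such that `r₁ = r₂`, `η₁ = η₂`, `τ = 0` do not hold simultaneously,
the correlation sum is bounded in magnitude by `p^n + 3`. -/
theorem construction4_correlation_bound
    (p n : ℕ) (hp : p.Prime) (hn : 1 ≤ n)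
    (F : Type) [Field F] [Fintype F] (hF : Fintype.card F = p ^ (2 * n))
    (g : Fˣ) (hg : ∀ x : Fˣ, x ∈ Subgroup.zpowers g)
    (Δ : ℕ) (hΔdvd : Δ ∣ p ^ (2 * n) - 1) (hΔ : 1 < Δ)
    (ψ : Fˣ →* ℂˣ) (hψord : orderOf ψ = Δ)
    (ψ₁ : F → ℂ) (hψ₁zero : ψ₁ 0 = 1) (hψ₁ : ∀ u : Fˣ, ψ₁ (u : F) = ((ψ u : ℂˣ) : ℂ))
    (Q : ℕ) (hQdvd : Q ∣ p ^ (2 * n) - 1) (hQ1 : 1 < Q) (hQ2 : Q < p ^ (2 * n) - 1)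
    (N : ℕ) (hN : N = (p ^ (2 * n) - 1) / Q)
    (r₁ r₂ : ℕ) (hr₁ : 1 ≤ r₁) (hr₁' : r₁ ≤ Δ - 1) (hr₂ : 1 ≤ r₂) (hr₂' : r₂ ≤ Δ - 1)
    (η₁ η₂ : Fˣ)
    (hη₁ : ∃ j : ℕ, j < Q ∧ η₁ = g ^ (N * j))
    (hη₂ : ∃ j : ℕ, j < Q ∧ η₂ = g ^ (N * j))
    (τ : ℕ) (hτ : τ ≤ N - 1)
    (hnd : ¬(r₁ = r₂ ∧ η₁ = η₂ ∧ τ = 0)) :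
    ‖∑ y ∈ Finset.range (p ^ (2 * n) - 1),
        ψ₁ ((g : F) ^ y + (η₁ : F)) ^ r₁ *
          (starRingEnd ℂ) (ψ₁ ((g : F) ^ (y + τ) + (η₂ : F)) ^ r₂)‖
      ≤ (p : ℝ) ^ n + 3 := by
  classical
  -- basic numerology
  have hq4 : 4 ≤ p ^ (2 * n) := by
    calc (4 : ℕ) = 2 ^ 2 := rfl
    _ ≤ 2 ^ (2 * n) := Nat.pow_le_pow_right (by norm_num) (by omega)
    _ ≤ p ^ (2 * n) := Nat.pow_le_pow_left hp.two_le _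
  have hpn1 : (1 : ℝ) ≤ (p : ℝ) ^ n := by
    have : (1 : ℝ) ≤ (p : ℝ) := by exact_mod_cast hp.one_lt.le
    exact one_le_pow₀ this
  have hcardu : Fintype.card Fˣ = p ^ (2 * n) - 1 := by
    rw [Fintype.card_units, hF]
  -- the multiplicative character χ₀ attached to ψ
  set χ₀ : MulChar F ℂ := MulChar.ofUnitHom ψ with hχ₀def
  have hχ₀u : ∀ u : Fˣ, χ₀ ↑u = ((ψ u : ℂˣ) : ℂ) := fun u => MulChar.ofUnitHom_coe ψ u
  -- values on units have absolute value 1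
  have habs1 : ∀ u : Fˣ, ‖χ₀ ↑u‖ = 1 := by
    intro u
    have hpow : ((ψ u : ℂˣ) : ℂ) ^ (p ^ (2 * n) - 1) = 1 := by
      have h1 : u ^ (p ^ (2 * n) - 1) = 1 := by rw [← hcardu]; exact pow_card_eq_one
      have h2 : (ψ u) ^ (p ^ (2 * n) - 1) = 1 := by rw [← map_pow, h1, map_one]
      have h3 := congrArg (Units.val) h2
      push_cast at h3
      exact_mod_cast h3
    rw [hχ₀u u]
    exact Complex.norm_eq_one_of_pow_eq_one hpow (by omega)
  have habsk : ∀ (k : ℕ) (u : Fˣ), ‖(χ₀ ^ k) ↑u‖ = 1 := by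
    intro k u
    rw [MulChar.pow_apply_coe, norm_pow, habs1, one_pow]
  set χ : MulChar F ℂ := χ₀ ^ r₁ with hχdef
  set μ : MulChar F ℂ := (χ₀ ^ r₂)⁻¹ with hμdef
  have habsχ : ∀ x : F, ‖χ x‖ ≤ 1 := by
    intro x
    by_cases hx : IsUnit x
    · obtain ⟨u, rfl⟩ := hx; rw [habsk]
    · rw [MulChar.map_nonunit _ hx, norm_zero]; norm_num
  have habsμu : ∀ u : Fˣ, ‖μ ↑u‖ = 1 := by
    intro u
    rw [hμdef, MulChar.inv_apply_eq_inv', norm_inv, habsk, inv_one]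
  have habsμ : ∀ x : F, ‖μ x‖ ≤ 1 := by
    intro x
    by_cases hx : IsUnit x
    · obtain ⟨u, rfl⟩ := hx; rw [habsμu]
    · rw [MulChar.map_nonunit _ hx, norm_zero]; norm_num
  -- nontriviality
  have hpowne : ∀ r : ℕ, 1 ≤ r → r ≤ Δ - 1 → χ₀ ^ r ≠ 1 := by
    intro r h1 h2 h
    have hψr : ψ ^ r = 1 := by
      ext u
      have h0 := congrArg (fun ξ : MulChar F ℂ => ξ ↑u) h
      simp only [MulChar.pow_apply_coe, MulChar.one_apply_coe, hχ₀u] at h0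
      have h1 : (((ψ u) ^ r : ℂˣ) : ℂ) = ((1 : ℂˣ) : ℂ) := by push_cast; exact h0
      have h2 : (ψ u) ^ r = 1 := Units.ext h1
      have h3 := congrArg Units.val h2
      push_cast at h3
      simpa [MonoidHom.pow_apply] using h3
    have hdvd : Δ ∣ r := hψord ▸ orderOf_dvd_of_pow_eq_one hψr
    have := Nat.le_of_dvd (by omega) hdvd
    omega
  have hχne : χ ≠ 1 := hpowne r₁ hr₁ hr₁'
  have hμne : μ ≠ 1 := by
    rw [hμdef, ne_eq, inv_eq_one]
    exact hpowne r₂ hr₂ hr₂'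
  -- pointwise descriptions of the summands
  have h1 : ∀ x : F, ψ₁ x ^ r₁ = χ x + (if x = 0 then 1 else 0) := by
    intro x
    by_cases hx : x = 0
    · subst hx
      rw [hψ₁zero, one_pow, if_pos rfl, MulChar.map_nonunit _ (by simp), zero_add]
    · obtain ⟨u, rfl⟩ := isUnit_iff_ne_zero.mpr hx
      rw [hψ₁ u, if_neg hx, add_zero, hχdef, MulChar.pow_apply_coe, hχ₀u]
  have h2 : ∀ x : F, (starRingEnd ℂ) (ψ₁ x ^ r₂) = μ x + (if x = 0 then 1 else 0) := by
    intro x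
    by_cases hx : x = 0
    · subst hx
      rw [hψ₁zero, one_pow, map_one, if_pos rfl, MulChar.map_nonunit _ (by simp), zero_add]
    · obtain ⟨u, rfl⟩ := isUnit_iff_ne_zero.mpr hx
      have : ψ₁ ↑u ^ r₂ = (χ₀ ^ r₂) ↑u := by
        rw [hψ₁ u, MulChar.pow_apply_coe, hχ₀u]
      rw [this, if_neg hx, add_zero, starRingEnd_apply, MulChar.star_apply', hμdef]
  -- abbreviations
  set a : F := (η₁ : F) with hadef
  set b : F := (η₂ : F) with hbdef
  set c : Fˣ := g ^ τ with hcdef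
  have hc0 : (c : F) ≠ 0 := Units.ne_zero c
  set β : F := b - (c : F) * a with hβdef
  -- reindex the sum
  have hrw : ∑ y ∈ Finset.range (p ^ (2 * n) - 1),
        ψ₁ ((g : F) ^ y + (η₁ : F)) ^ r₁ *
          (starRingEnd ℂ) (ψ₁ ((g : F) ^ (y + τ) + (η₂ : F)) ^ r₂)
      = ∑ x ∈ Finset.univ.erase (0 : F),
          ((χ (x + a) + (if x + a = 0 then 1 else 0)) *
            (μ ((c : F) * x + b) + (if (c : F) * x + b = 0 then 1 else 0))) := by
    rw [show p ^ (2 * n) - 1 = Fintype.card F - 1 by rw [hF]]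
    rw [← aux_reindex g hg (fun x => (χ (x + a) + (if x + a = 0 then 1 else 0)) *
            (μ ((c : F) * x + b) + (if (c : F) * x + b = 0 then 1 else 0)))]
    refine Finset.sum_congr rfl fun y _ => ?_
    have hyτ : (g : F) ^ (y + τ) = (c : F) * (g : F) ^ y := by
      rw [pow_add, mul_comm, hcdef, Units.val_pow_eq_pow_val]
    rw [h1, h2, hyτ]
  rw [hrw]
  -- expand the product
  have hexp : ∑ x ∈ Finset.univ.erase (0 : F),
          ((χ (x + a) + (if x + a = 0 then 1 else 0)) *
            (μ ((c : F) * x + b) + (if (c : F) * x + b = 0 then 1 else 0)))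
      = (∑ x ∈ Finset.univ.erase (0 : F), χ (x + a) * μ ((c : F) * x + b))
        + (∑ x ∈ Finset.univ.erase (0 : F), χ (x + a) * (if (c : F) * x + b = 0 then 1 else 0))
        + (∑ x ∈ Finset.univ.erase (0 : F), (if x + a = 0 then 1 else 0) * μ ((c : F) * x + b))
        + (∑ x ∈ Finset.univ.erase (0 : F),
            (if x + a = 0 then 1 else 0) * (if (c : F) * x + b = 0 then 1 else 0)) := by
    rw [← Finset.sum_add_distrib, ← Finset.sum_add_distrib, ← Finset.sum_add_distrib]
    refine Finset.sum_congr rfl fun x _ => ?_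
    ring
  rw [hexp]
  -- the four pieces
  set T₂ : ℂ := ∑ x ∈ Finset.univ.erase (0 : F),
      χ (x + a) * (if (c : F) * x + b = 0 then 1 else 0) with hT₂def
  set T₃ : ℂ := ∑ x ∈ Finset.univ.erase (0 : F),
      (if x + a = 0 then 1 else 0) * μ ((c : F) * x + b) with hT₃def
  set T₄ : ℂ := ∑ x ∈ Finset.univ.erase (0 : F),
      (if x + a = 0 then 1 else 0) * (if (c : F) * x + b = 0 then 1 else 0) with hT₄def
  set T : ℂ := ∑ x : F, χ (x + a) * μ ((c : F) * x + b) with hTdef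
  have hT₁ : ∑ x ∈ Finset.univ.erase (0 : F), χ (x + a) * μ ((c : F) * x + b)
      = T - χ a * μ b := by
    rw [hTdef, ← Finset.add_sum_erase _ _ (Finset.mem_univ (0 : F))]
    rw [zero_add, mul_zero, zero_add]
    ring
  rw [hT₁]
  -- bounds on the correction terms
  have hcond2 : ∀ x : F, ((c : F) * x + b = 0) ↔ x = (c : F)⁻¹ * (-b) := by
    intro x
    constructor
    · intro h
      have h' : (c : F) * x = -b := by linear_combination h
      rw [← h', inv_mul_cancel_left₀ hc0]
    · intro h
      rw [h, mul_inv_cancel_left₀ hc0]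
      ring
  have hT₂abs : ‖T₂‖ ≤ 1 := by
    have : T₂ = ∑ x ∈ Finset.univ.erase (0 : F),
        (if x = (c : F)⁻¹ * (-b) then χ (x + a) else 0) := by
      refine Finset.sum_congr rfl fun x _ => ?_
      by_cases hx : (c : F) * x + b = 0
      · have hx' : x = (c : F)⁻¹ * (-b) := (hcond2 x).mp hx
        rw [if_pos hx, if_pos hx', mul_one]
      · have hx' : ¬(x = (c : F)⁻¹ * (-b)) := fun h => hx ((hcond2 x).mpr h)
        rw [if_neg hx, if_neg hx', mul_zero]
    rw [this, Finset.sum_ite_eq' _ _ (fun x => χ (x + a))]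
    split
    · exact habsχ _
    · simp
  have hT₃abs : ‖T₃‖ ≤ 1 := by
    have : T₃ = ∑ x ∈ Finset.univ.erase (0 : F),
        (if x = -a then μ ((c : F) * x + b) else 0) := by
      refine Finset.sum_congr rfl fun x _ => ?_
      by_cases hx : x + a = 0
      · have hx' : x = -a := by linear_combination hx
        rw [if_pos hx, if_pos hx', one_mul]
      · have hx' : ¬(x = -a) := by
          intro h
          apply hx
          rw [h]; ring
        rw [if_neg hx, if_neg hx', zero_mul]
    rw [this, Finset.sum_ite_eq' _ _ (fun x => μ ((c : F) * x + b))]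
    split
    · exact habsμ _
    · simp
  have hT₄eq : T₄ = if (-a : F) ∈ Finset.univ.erase (0 : F)
      then (if (c : F) * (-a) + b = 0 then (1 : ℂ) else 0) else 0 := by
    have : T₄ = ∑ x ∈ Finset.univ.erase (0 : F),
        (if x = -a then (if (c : F) * x + b = 0 then (1 : ℂ) else 0) else 0) := by
      refine Finset.sum_congr rfl fun x _ => ?_
      by_cases hx : x + a = 0
      · have hx' : x = -a := by linear_combination hx
        rw [if_pos hx, if_pos hx', one_mul]
      · have hx' : ¬(x = -a) := by
          intro h
          apply hx
          rw [h]; ring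
        rw [if_neg hx, if_neg hx', zero_mul]
    rw [this, Finset.sum_ite_eq' _ _ (fun x => if (c : F) * x + b = 0 then (1 : ℂ) else 0)]
  have hT₄abs : ‖T₄‖ ≤ 1 := by
    rw [hT₄eq]
    split
    · split <;> simp
    · simp
  have hT₄zero : β ≠ 0 → T₄ = 0 := by
    intro hβ
    rw [hT₄eq]
    have : ¬((c : F) * (-a) + b = 0) := by
      intro h
      exact hβ (by rw [hβdef]; linear_combination h)
    rw [if_neg this, ite_self]
  have hfabs : ‖χ a * μ b‖ ≤ 1 := by
    rw [norm_mul]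
    exact mul_le_one₀ (habsχ a) (norm_nonneg _) (habsμ b)
  -- triangle inequality skeleton
  have htri : ‖T - χ a * μ b + T₂ + T₃ + T₄‖
      ≤ ‖T‖ + ‖χ a * μ b‖ + ‖T₂‖ + ‖T₃‖
        + ‖T₄‖ := by
    calc ‖T - χ a * μ b + T₂ + T₃ + T₄‖
        ≤ ‖T - χ a * μ b + T₂ + T₃‖ + ‖T₄‖ := norm_add_le _ _
      _ ≤ ‖T - χ a * μ b + T₂‖ + ‖T₃‖ + ‖T₄‖ := by
          gcongr; exact norm_add_le _ _
      _ ≤ ‖T - χ a * μ b‖ + ‖T₂‖ + ‖T₃‖ + ‖T₄‖ := by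
          gcongr; exact norm_add_le _ _
      _ ≤ ‖T‖ + ‖χ a * μ b‖ + ‖T₂‖ + ‖T₃‖
            + ‖T₄‖ := by
          gcongr; exact norm_sub_le _ _
  -- identification of equal-character case with r₁ = r₂
  have heqr : χ₀ ^ r₁ = χ₀ ^ r₂ → r₁ = r₂ := by
    intro h
    have hψr : ψ ^ r₁ = ψ ^ r₂ := by
      ext u
      have h0 := congrArg (fun ξ : MulChar F ℂ => ξ ↑u) h
      simp only [MulChar.pow_apply_coe, hχ₀u] at h0
      have h1 : (((ψ u) ^ r₁ : ℂˣ) : ℂ) = (((ψ u) ^ r₂ : ℂˣ) : ℂ) := by push_cast; exact h0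
      have h2 : (ψ u) ^ r₁ = (ψ u) ^ r₂ := Units.ext h1
      have h3 := congrArg Units.val h2
      push_cast at h3
      simpa [MonoidHom.pow_apply] using h3
    have key : ∀ s t : ℕ, t ≤ s → s ≤ Δ - 1 → t ≤ Δ - 1 → ψ ^ s = ψ ^ t → s = t := by
      intro s t hts hsΔ htΔ hst
      have hΔ1 : ψ ^ Δ = 1 := by rw [← hψord]; exact pow_orderOf_eq_one ψ
      have h3 : ψ ^ (s - t + Δ) = 1 := by
        have he : s - t + Δ = s + (Δ - t) := by omega
        erw [he, pow_add, hst, ← pow_add, show t + (Δ - t) = Δ by omega, hΔ1]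
      have h5 : Δ ∣ s - t + Δ := by
        have h5' := orderOf_dvd_of_pow_eq_one (x := ψ) (n := s - t + Δ) h3
        rwa [hψord] at h5'
      have h6 : Δ ∣ s - t := by
        have := Nat.dvd_sub h5 (dvd_refl Δ)
        simpa using this
      rcases Nat.eq_zero_of_dvd_of_lt h6 (by omega) with h7
      omega
    rcases le_total r₂ r₁ with h' | h'
    · exact key r₁ r₂ h' hr₁' hr₂' hψr
    · exact (key r₂ r₁ h' hr₂' hr₁' hψr.symm).symm
  -- main case analysis
  by_cases hβ : β = 0
  · -- degenerate position: b = c * a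
    by_cases hrr : χ₀ ^ r₁ = χ₀ ^ r₂
    · -- excluded by the hypothesis hnd
      exfalso
      have hr12 : r₁ = r₂ := heqr hrr
      have hb' : b = (c : F) * a := by
        have hb : b - (c : F) * a = 0 := by rw [← hβdef]; exact hβ
        linear_combination hb
      have hbca : η₂ = c * η₁ := Units.ext (by rw [Units.val_mul]; exact hb')
      obtain ⟨j₁, hj₁, he₁⟩ := hη₁
      obtain ⟨j₂, hj₂, he₂⟩ := hη₂
      have hNQ : N * Q = p ^ (2 * n) - 1 := by
        rw [hN, Nat.div_mul_cancel hQdvd]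
      have hN0 : 0 < N := by
        rcases Nat.eq_zero_or_pos N with h | h
        · rw [h, zero_mul] at hNQ; omega
        · exact h
      have hog : orderOf g = p ^ (2 * n) - 1 := by
        rw [orderOf_eq_card_of_forall_mem_zpowers hg, Nat.card_eq_fintype_card, hcardu]
      have hpow : g ^ (N * j₂) = g ^ (τ + N * j₁) := by
        rw [pow_add, ← he₂, ← he₁, ← hcdef, ← hbca]
      have hz : g ^ (((τ + N * j₁ : ℕ) : ℤ) - ((N * j₂ : ℕ) : ℤ)) = 1 := by
        rw [zpow_sub, zpow_natCast, zpow_natCast, ← hpow]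
        simp
      have hmod : ((orderOf g : ℤ)) ∣ (((τ + N * j₁ : ℕ) : ℤ) - ((N * j₂ : ℕ) : ℤ)) :=
        orderOf_dvd_iff_zpow_eq_one.mpr hz
      rw [hog, ← hNQ] at hmod
      have hdvd : (N : ℤ) ∣ ((τ : ℤ) + N * j₁ - N * j₂) := by
        have h'' : (N : ℤ) ∣ (((τ + N * j₁ : ℕ) : ℤ) - ((N * j₂ : ℕ) : ℤ)) :=
          dvd_trans ⟨Q, by push_cast; ring⟩ hmod
        push_cast at h'' ⊢
        convert h'' using 1
      have hdvdτ : (N : ℤ) ∣ (τ : ℤ) := by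
        have h1 : (N : ℤ) ∣ (N : ℤ) * j₁ := Dvd.intro _ rfl
        have h2 : (N : ℤ) ∣ (N : ℤ) * j₂ := Dvd.intro _ rfl
        have : (N : ℤ) ∣ (τ : ℤ) + N * j₁ - N * j₂ + N * j₂ - N * j₁ := dvd_sub (dvd_add hdvd h2) h1
        convert this using 1
        ring
      have hτN : τ < N := by omega
      have hτ0 : τ = 0 := by
        have hd : N ∣ τ := Int.natCast_dvd_natCast.mp hdvdτ
        rcases Nat.eq_zero_of_dvd_of_lt hd hτN with h
        omega
      have hc1 : c = 1 := by rw [hcdef, hτ0, pow_zero]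
      rw [hc1, one_mul] at hbca
      exact hnd ⟨hr12, hbca.symm, hτ0⟩
    · -- T = 0 here
      have hχμ : χ * μ ≠ 1 := by
        rw [hχdef, hμdef, ne_eq, mul_inv_eq_one]
        exact hrr
      have hT0 : T = 0 := by
        have hba : b = (c : F) * a := by rw [hβdef] at hβ; linear_combination hβ
        have : T = ∑ x : F, χ (x + a) * μ ((c : F) * (x + a)) := by
          rw [hTdef]
          refine Finset.sum_congr rfl fun x _ => ?_
          rw [hba]; ring_nf
        rw [this]
        have hre : ∑ x : F, χ (x + a) * μ ((c : F) * (x + a))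
            = ∑ u : F, χ u * μ ((c : F) * u) :=
          Fintype.sum_equiv (Equiv.addRight a) _ _ (fun x => rfl)
        rw [hre]
        have : ∀ u : F, χ u * μ ((c : F) * u) = μ (c : F) * ((χ * μ) u) := by
          intro u
          rw [map_mul, MulChar.mul_apply]
          ring
        rw [Finset.sum_congr rfl (fun u _ => this u), ← Finset.mul_sum,
          MulChar.sum_eq_zero_of_ne_one hχμ, mul_zero]
      rw [hT0] at htri ⊢
      have : ‖(0 : ℂ) - χ a * μ b + T₂ + T₃ + T₄‖ ≤ 0 + 1 + 1 + 1 + 1 := by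
        refine le_trans htri ?_
        gcongr <;> simp [hfabs, hT₂abs, hT₃abs, hT₄abs]
      refine le_trans this (by linarith)
  · -- nondegenerate position: reduce T to a Jacobi sum
    have hT₄0 : T₄ = 0 := hT₄zero hβ
    have hγ0 : β * (c : F)⁻¹ ≠ 0 := mul_ne_zero hβ (inv_ne_zero hc0)
    set γ : F := β * (c : F)⁻¹ with hγdef
    have hTsub : T = χ γ * μ β * ∑ w : F, χ w * μ (w + 1) := by
      have hre : T = ∑ w : F, χ (γ * w) * μ (β * (w + 1)) := by
        rw [hTdef]
        refine (Fintype.sum_equiv ((Equiv.mulLeft₀ γ hγ0).trans (Equiv.subRight a)) _ _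
          (fun w => ?_)).symm
        simp only [Equiv.trans_apply, Equiv.mulLeft₀_apply, Equiv.subRight_apply]
        congr 1
        · congr 1; ring
        · congr 1
          have hcγ : (c : F) * γ = β := by
            rw [hγdef, mul_comm β, ← mul_assoc, mul_inv_cancel₀ hc0, one_mul]
          refine Eq.symm ?_
          calc (c : F) * (γ * w - a) + b = ((c : F) * γ) * w + (b - (c : F) * a) := by ring
          _ = β * w + β := by rw [hcγ, ← hβdef]
          _ = β * (w + 1) := by ring
      rw [hre]
      rw [Finset.mul_sum]
      refine Finset.sum_congr rfl fun w _ => ?_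
      rw [map_mul χ, map_mul μ]
      ring
    have hχm1 : χ (-1 : F) * χ (-1 : F) = 1 := by
      rw [← map_mul]
      norm_num
    have hJsum : ∑ w : F, χ w * μ (w + 1) = χ (-1) * jacobiSum χ μ := by
      rw [jacobiSum, Finset.mul_sum]
      refine Fintype.sum_equiv (Equiv.neg F) _ _ (fun w => ?_)
      simp only [Equiv.neg_apply]
      rw [show (1 : F) - -w = w + 1 by ring, show (-w : F) = -1 * w by ring, map_mul χ]
      linear_combination (-(χ w * μ (w + 1))) * hχm1
    have habsT : ‖T‖ ≤ ‖jacobiSum χ μ‖ := by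
      rw [hTsub, hJsum]
      rw [norm_mul, norm_mul, norm_mul]
      calc ‖χ γ‖ * ‖μ β‖ *
            (‖χ (-1)‖ * ‖jacobiSum χ μ‖)
          ≤ 1 * 1 * (1 * ‖jacobiSum χ μ‖) := by
            gcongr
            · exact habsχ _
            · exact habsμ _
            · exact habsχ _
        _ = ‖jacobiSum χ μ‖ := by ring
    by_cases hrr : χ₀ ^ r₁ = χ₀ ^ r₂
    · -- here μ = χ⁻¹ and the Jacobi sum has absolute value 1
      have hμχ : μ = χ⁻¹ := by rw [hμdef, hχdef, hrr]
      have hJ : jacobiSum χ μ = -χ (-1) := by rw [hμχ]; exact jacobiSum_nontrivial_inv hχne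
      have habsJ : ‖jacobiSum χ μ‖ ≤ 1 := by
        rw [hJ, norm_neg]
        exact habsχ _
      have hTle : ‖T‖ ≤ 1 := le_trans habsT habsJ
      have h40 : ‖T₄‖ ≤ 0 := by rw [hT₄0]; simp
      have : ‖T - χ a * μ b + T₂ + T₃ + T₄‖ ≤ 1 + 1 + 1 + 1 + 0 := by
        refine le_trans htri ?_
        gcongr
      refine le_trans this (by linarith)
    · -- main case: |J| = p^n
      have hχμ : χ * μ ≠ 1 := by
        rw [hχdef, hμdef, ne_eq, mul_inv_eq_one]
        exact hrr
      have hrc : ringChar ℂ ≠ ringChar F := by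
        rw [ringChar.eq_zero]
        exact (CharP.ringChar_ne_zero_of_finite F).symm
      have hJmul := jacobiSum_mul_jacobiSum_inv hrc hχne hμne hχμ
      have hconj : jacobiSum χ⁻¹ μ⁻¹ = (starRingEnd ℂ) (jacobiSum χ μ) := by
        rw [jacobiSum, jacobiSum, map_sum]
        refine Finset.sum_congr rfl fun x _ => ?_
        rw [map_mul, starRingEnd_apply, starRingEnd_apply, MulChar.star_apply',
          MulChar.star_apply']
      have habsJ : ‖jacobiSum χ μ‖ = (p : ℝ) ^ n := by
        have h1 : jacobiSum χ μ * (starRingEnd ℂ) (jacobiSum χ μ) = (Fintype.card F : ℂ) := by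
          rw [← hconj]; exact hJmul
        rw [Complex.mul_conj] at h1
        have h2 : Complex.normSq (jacobiSum χ μ) = (Fintype.card F : ℝ) := by
          exact_mod_cast h1
        have h3 : ‖jacobiSum χ μ‖ ^ 2 = ((p : ℝ) ^ n) ^ 2 := by
          rw [Complex.sq_norm, h2, hF]
          rw [← pow_mul]
          norm_cast
          ring
        exact (sq_eq_sq₀ (norm_nonneg _) (by positivity)).mp h3
      have hTle : ‖T‖ ≤ (p : ℝ) ^ n := by rw [← habsJ]; exact habsT
      have h40 : ‖T₄‖ ≤ 0 := by rw [hT₄0]; simp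
      have : ‖T - χ a * μ b + T₂ + T₃ + T₄‖ ≤ (p : ℝ) ^ n + 1 + 1 + 1 + 0 := by
        refine le_trans htri ?_
        gcongr
      refine le_trans this (by linarith)
end

section
/- Let F_625 be the finite field with 625 elements, Tr : F_625 → F_5 the field trace, and ζ₅ = e^{2πi/5} ∈ ℂ. Then Σ_{z ∈ F_625} ζ₅^{Tr(z³)} = −50, i.e., the additive character sum Σ_{z ∈ F_625} χ(z³) with χ(x) = ζ₅^{Tr(x)} equals −2·√625. -/
open Finset

section Aux

open Polynomial in
private lemma aux_cubic_sum (F : Type) [Field F] [Fintype F] [Algebra (ZMod 5) F]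
    (hF : Fintype.card F = 625) :
    ∑ z : F, Complex.exp (2 * Real.pi * Complex.I / 5) ^ ((Algebra.trace (ZMod 5) F) (z ^ 3)).val
      = -50 := by
  classical
  haveI fact5 : Fact (Nat.Prime 5) := ⟨by norm_num⟩
  haveI : CharP F 5 := charP_of_injective_algebraMap (algebraMap (ZMod 5) F).injective 5
  set ζ : ℂ := Complex.exp (2 * Real.pi * Complex.I / 5) with hζdef
  have hζ : IsPrimitiveRoot ζ 5 := Complex.isPrimitiveRoot_exp 5 (by norm_num)
  have hζ5 : ζ ^ 5 = 1 := hζ.pow_eq_one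
  -- the canonical additive character
  set ψ : AddChar F ℂ :=
    (AddChar.zmodChar 5 hζ5).compAddMonoidHom (Algebra.trace (ZMod 5) F).toAddMonoidHom with hψdef
  have hψapp : ∀ x : F, ψ x = ζ ^ ((Algebra.trace (ZMod 5) F) x).val := fun x => rfl
  -- finrank and trace of 1
  have hrank : Module.finrank (ZMod 5) F = 4 := by
    have h := Module.card_eq_pow_finrank (K := ZMod 5) (V := F)
    rw [ZMod.card, hF] at h
    have h4 : (5:ℕ) ^ Module.finrank (ZMod 5) F = 5 ^ 4 := by omega
    exact Nat.pow_right_injective (by norm_num) h4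
  have htr1 : (Algebra.trace (ZMod 5) F) 1 = 4 := by
    have h := Algebra.trace_algebraMap (R := ZMod 5) (S := F) 1
    rw [map_one] at h
    rw [h, hrank]
    simp
  have hψ1 : ψ 1 = ζ ^ 4 := by
    rw [hψapp, htr1, show ((4:ZMod 5)).val = 4 from rfl]
  have hψne : ψ ≠ 1 := by
    intro h
    have h1 : ψ 1 = 1 := by rw [h]; simp
    rw [hψ1] at h1
    exact hζ.pow_ne_one_of_pos_of_lt (by norm_num) (by norm_num) h1
  have hψprim : ψ.IsPrimitive := AddChar.IsPrimitive.of_ne_one hψne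
  -- cubic multiplicative character
  have hω : IsPrimitiveRoot (Complex.exp (2 * Real.pi * Complex.I / 3)) 3 :=
    Complex.isPrimitiveRoot_exp 3 (by norm_num)
  obtain ⟨χ, hχord⟩ := MulChar.exists_mulChar_orderOf F (n := 3) (by rw [hF]; norm_num) hω
  have hχ3 : χ ^ 3 = 1 := by rw [← hχord]; exact pow_orderOf_eq_one χ
  have hχne : χ ≠ 1 := by
    intro h
    rw [h, orderOf_one] at hχord
    exact absurd hχord (by norm_num)
  have hcube : ∀ x : F, x ≠ 0 → χ x ^ 3 = 1 := by
    intro x hx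
    rw [← MulChar.pow_apply' χ (by norm_num) x, hχ3,
      MulChar.one_apply (isUnit_iff_ne_zero.mpr hx)]
  -- a generator of the unit group
  obtain ⟨g, hg⟩ := IsCyclic.exists_generator (α := Fˣ)
  have hcardu : Fintype.card Fˣ = 624 := by rw [Fintype.card_units, hF]
  have hordg : orderOf g = 624 := by
    rw [orderOf_eq_card_of_forall_mem_zpowers hg, Nat.card_eq_fintype_card, hcardu]
  set φ := MulChar.equivToUnitHom χ with hφdef
  have hφ : ∀ u : Fˣ, (φ u : ℂ) = χ u := fun u => MulChar.coe_equivToUnitHom χ u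
  have hφg3 : (φ g) ^ 3 = 1 := by
    ext
    push_cast
    rw [hφ g]
    exact hcube _ g.ne_zero
  have hφgne : φ g ≠ 1 := by
    intro h
    apply hχne
    rw [MulChar.eq_iff hg, ← hφ g, h, MulChar.one_apply_coe]
    rfl
  have hordφg : orderOf (φ g) = 3 := by
    have hdvd : orderOf (φ g) ∣ 3 := orderOf_dvd_of_pow_eq_one hφg3
    rcases (Nat.Prime.eq_one_or_self_of_dvd (by norm_num) _ hdvd) with h | h
    · exact absurd (orderOf_eq_one_iff.mp h) hφgne
    · exact h
  -- x is a nonzero cube iff χ x = 1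
  have key : ∀ u : Fˣ, χ ↑u = 1 ↔ ∃ v : Fˣ, v ^ 3 = u := by
    intro u
    obtain ⟨k, hk⟩ := Subgroup.mem_zpowers_iff.mp (hg u)
    constructor
    · intro h1
      have hphiu : φ u = 1 := by ext; rw [hφ u, h1]; rfl
      have hzp : (φ g) ^ k = 1 := by rw [← map_zpow, hk, hphiu]
      have h3k : (3:ℤ) ∣ k := by
        have := orderOf_dvd_iff_zpow_eq_one.mpr hzp
        rw [hordφg] at this
        exact_mod_cast this
      obtain ⟨m, rfl⟩ := h3k
      refine ⟨g ^ m, ?_⟩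
      rw [← hk, ← zpow_natCast (g ^ m) 3, ← zpow_mul, mul_comm]
      norm_num
    · rintro ⟨v, rfl⟩
      rw [Units.val_pow_eq_pow_val, map_pow]
      exact hcube _ v.ne_zero
  -- primitive cube root of unity in F
  have hω3 : orderOf (g ^ (208:ℕ)) = 3 := by
    rw [orderOf_pow, hordg]
    decide
  have hprimF : IsPrimitiveRoot ((g ^ (208:ℕ) : Fˣ) : F) 3 :=
    IsPrimitiveRoot.coe_units_iff.mpr (hω3 ▸ IsPrimitiveRoot.orderOf (g ^ (208:ℕ)))
  have hcard3 : (Polynomial.nthRootsFinset 3 (1 : F)).card = 3 := hprimF.card_nthRootsFinset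
  -- the counting function
  set c : F → ℕ := fun b => (univ.filter fun z : F => z ^ 3 = b).card with hcdef
  have hc0 : c 0 = 1 := by
    have : (univ.filter fun z : F => z ^ 3 = (0:F)) = {0} := by
      ext z
      simp [pow_eq_zero_iff]
    rw [hcdef]
    simp only [this, card_singleton]
  have hc3 : ∀ u : Fˣ, (∃ v : Fˣ, v ^ 3 = u) → c ↑u = 3 := by
    rintro u ⟨v, rfl⟩
    rw [hcdef]
    simp only
    have hbij : (filter (fun z : F => z ^ 3 = ((v ^ 3 : Fˣ) : F)) univ).card
        = (Polynomial.nthRootsFinset 3 (1 : F)).card := by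
      refine Finset.card_bij' (fun z _ => z * ((v⁻¹ : Fˣ) : F)) (fun y _ => y * (v : F))
        ?_ ?_ ?_ ?_
      · intro z hz
        simp only [mem_filter, mem_univ, true_and] at hz
        rw [Polynomial.mem_nthRootsFinset (by norm_num)]
        rw [mul_pow, hz]
        push_cast
        field_simp
      · intro y hy
        rw [Polynomial.mem_nthRootsFinset (by norm_num)] at hy
        simp only [mem_filter, mem_univ, true_and]
        rw [mul_pow, hy, one_mul]
        push_cast
        ring
      · intro z hz
        rw [mul_assoc, Units.inv_mul, mul_one]
      · intro y hy
        rw [mul_assoc, Units.mul_inv, mul_one]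
    rw [hbij, hcard3]
  have hcb3 : ∀ b : F, b ≠ 0 → χ b = 1 → c b = 3 := by
    intro b hb hχb
    exact hc3 (Units.mk0 b hb) ((key (Units.mk0 b hb)).mp (by rwa [Units.val_mk0]))
  have hcnot : ∀ b : F, b ≠ 0 → χ b ≠ 1 → c b = 0 := by
    intro b hb hχb
    rw [hcdef]
    simp only
    rw [Finset.card_eq_zero, Finset.filter_eq_empty_iff]
    intro z _
    intro hzb
    apply hχb
    have hz : z ≠ 0 := by
      intro h
      rw [h] at hzb
      simp at hzb
      exact hb hzb.symm
    refine (key (Units.mk0 b hb)).mpr ⟨Units.mk0 z hz, ?_⟩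
    ext
    rw [Units.val_pow_eq_pow_val, Units.val_mk0, Units.val_mk0, hzb]
  -- the backbone sum identity
  have hS : ∑ z : F, ψ (z ^ 3) = ∑ b : F, (c b : ℂ) * ψ b := by
    calc ∑ z : F, ψ (z ^ 3)
        = ∑ b ∈ (univ : Finset F).image (fun z : F => z ^ 3),
            (univ.filter fun z : F => z ^ 3 = b).card • ψ b :=
          Finset.sum_comp (fun b : F => ψ b) (fun z : F => z ^ 3)
      _ = ∑ b : F, (univ.filter fun z : F => z ^ 3 = b).card • ψ b := by
          refine Finset.sum_subset (Finset.subset_univ _) ?_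
          intro b _ hb
          have : (univ.filter fun z : F => z ^ 3 = b).card = 0 := by
            rw [Finset.card_eq_zero, Finset.filter_eq_empty_iff]
            intro z _ h
            exact hb (Finset.mem_image.mpr ⟨z, Finset.mem_univ z, h⟩)
          rw [this, zero_smul]
      _ = ∑ b : F, (c b : ℂ) * ψ b := by
          refine Finset.sum_congr rfl fun b _ => ?_
          rw [nsmul_eq_mul]
  -- pointwise identity with characters
  have hpt : ∀ b : F, (c b : ℂ) * ψ b
      = (if b = 0 then 1 else 0) + ((1 : MulChar F ℂ) b + χ b + (χ ^ 2) b) * ψ b := by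
    intro b
    rcases eq_or_ne b 0 with rfl | hb
    · rw [hc0]
      simp [MulChar.map_zero]
    · rw [if_neg hb, MulChar.one_apply (isUnit_iff_ne_zero.mpr hb),
        MulChar.pow_apply' χ two_ne_zero b]
      by_cases hχb : χ b = 1
      · rw [hcb3 b hb hχb, hχb]
        norm_num
      · have hfac : (1 : ℂ) + χ b + χ b ^ 2 = 0 := by
          have h3 := hcube b hb
          have hne : χ b - 1 ≠ 0 := sub_ne_zero.mpr hχb
          have hmul : (χ b - 1) * (1 + χ b + χ b ^ 2) = 0 := by linear_combination h3
          rcases mul_eq_zero.mp hmul with h | h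
          · exact absurd h hne
          · exact h
        rw [hcnot b hb hχb]
        push_cast
        linear_combination -(ψ b * hfac)
  -- second pointwise identity, for the integrality argument
  have hpt2 : ∀ b : F, (c b : ℂ) * ψ b
      = (if b = 0 then 1 else 0) + (if b ≠ 0 ∧ χ b = 1 then 3 * ψ b else 0) := by
    intro b
    rcases eq_or_ne b 0 with rfl | hb
    · rw [hc0]
      simp
    · rw [if_neg hb]
      by_cases hχb : χ b = 1
      · rw [if_pos ⟨hb, hχb⟩, hcb3 b hb hχb]
        push_cast
        ring
      · rw [if_neg (by tauto), hcnot b hb hχb]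
        simp
  -- sum splits
  have hsplit : ∑ b : F, (c b : ℂ) * ψ b
      = 1 + (gaussSum 1 ψ + gaussSum χ ψ + gaussSum (χ ^ 2) ψ) := by
    rw [Finset.sum_congr rfl fun b _ => hpt b, Finset.sum_add_distrib]
    congr 1
    · simp
    · rw [gaussSum, gaussSum, gaussSum, ← Finset.sum_add_distrib, ← Finset.sum_add_distrib]
      exact Finset.sum_congr rfl fun b _ => by ring
  set V : ℂ := ∑ b ∈ univ.filter (fun b : F => b ≠ 0 ∧ χ b = 1), ψ b with hVdef
  have hSV : ∑ z : F, ψ (z ^ 3) = 1 + 3 * V := by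
    rw [hS, Finset.sum_congr rfl fun b _ => hpt2 b, Finset.sum_add_distrib]
    congr 1
    · simp
    · rw [hVdef, Finset.mul_sum, Finset.sum_filter]
  have hVint : IsIntegral ℤ V := by
    refine IsIntegral.sum _ fun b _ => ?_
    rw [hψapp]
    exact (hζ.isIntegral (by norm_num)).pow _
  have hg1 : gaussSum (1 : MulChar F ℂ) ψ = -1 := by
    have h0 : ∑ b : F, ψ b = 0 := AddChar.sum_eq_zero_of_ne_one hψne
    have hterm : ∀ b : F, (1 : MulChar F ℂ) b * ψ b = ψ b - (if b = 0 then 1 else 0) := by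
      intro b
      rcases eq_or_ne b 0 with rfl | hb
      · simp [MulChar.map_zero]
      · rw [MulChar.one_apply (isUnit_iff_ne_zero.mpr hb), if_neg hb, one_mul, sub_zero]
    rw [gaussSum, Finset.sum_congr rfl fun b _ => hterm b, Finset.sum_sub_distrib, h0]
    simp
  -- Frobenius invariance
  have hfrobtr : ∀ x : F, (Algebra.trace (ZMod 5) F) (x ^ 5) = (Algebra.trace (ZMod 5) F) x := by
    have hcomm : ∀ a : ZMod 5,
        frobeniusEquiv F 5 (algebraMap (ZMod 5) F a) = algebraMap (ZMod 5) F a := by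
      intro a
      rw [frobeniusEquiv_def, ← map_pow, ZMod.pow_card]
    intro x
    have h := Algebra.trace_eq_of_algEquiv (AlgEquiv.ofRingEquiv hcomm) x
    rw [show (AlgEquiv.ofRingEquiv hcomm) x = x ^ 5 from rfl] at h
    exact h
  have hfrob : gaussSum (χ ^ 2) ψ = gaussSum χ ψ := by
    have hbij : Function.Bijective (frobenius F 5) := bijective_frobenius F 5
    rw [gaussSum, gaussSum, ← Function.Bijective.sum_comp hbij (fun a => (χ ^ 2) a * ψ a)]
    refine Finset.sum_congr rfl fun a _ => ?_
    simp only [frobenius_def]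
    rcases eq_or_ne a 0 with rfl | ha
    · rw [zero_pow (by norm_num)]
      simp [MulChar.map_zero]
    · have hψ5 : ψ (a ^ 5) = ψ a := by rw [hψapp, hψapp, hfrobtr]
      rw [MulChar.pow_apply' χ two_ne_zero, map_pow, hψ5]
      have h3 := hcube a ha
      have hpow : (χ a ^ 5) ^ 2 = χ a := by
        calc (χ a ^ 5) ^ 2 = (χ a ^ 3) ^ 3 * χ a := by ring
          _ = χ a := by rw [h3]; ring
      rw [hpow]
  -- the Gauss sum product formula
  have hχm1 : χ (-1) = 1 := by
    have h2 : χ (-1) * χ (-1) = 1 := by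
      rw [← map_mul]
      norm_num
    have h3 := hcube (-1) (by
      intro h
      exact one_ne_zero (neg_eq_zero.mp h))
    linear_combination h3 - χ (-1) * h2
  have hprod : gaussSum χ ψ * gaussSum (χ ^ 2) ψ = 625 := by
    have h := gaussSum_mul_gaussSum_pow_orderOf_sub_one hχne hψprim
    rw [hχord, hχm1, hF] at h
    norm_num at h
    exact h
  -- conclusion
  set G := gaussSum χ ψ with hGdef
  have hS2 : ∑ z : F, ψ (z ^ 3) = 2 * G := by
    rw [hS, hsplit, hg1, hfrob]
    ring
  have hGsq : G * G = 625 := by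
    calc G * G = gaussSum χ ψ * gaussSum (χ ^ 2) ψ := by rw [hfrob]
      _ = 625 := hprod
  have hGval : G = -25 := by
    have hfactor : (G - 25) * (G + 25) = 0 := by linear_combination hGsq
    rcases mul_eq_zero.mp hfactor with h | h
    · exfalso
      have hG25 : G = 25 := by linear_combination h
      have h50 : (1 : ℂ) + 3 * V = 50 := by
        rw [← hSV, hS2, hG25]
        norm_num
      have hV3 : V = (49 : ℂ) / 3 := by
        field_simp
        linear_combination h50
      have hQ : IsIntegral ℤ ((49 : ℚ) / 3) := by
        have hmap : algebraMap ℚ ℂ ((49 : ℚ) / 3) = (49 : ℂ) / 3 := by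
          rw [eq_ratCast (algebraMap ℚ ℂ)]
          push_cast
          ring
        rw [hV3] at hVint
        rw [← hmap] at hVint
        exact (isIntegral_algebraMap_iff (algebraMap ℚ ℂ).injective).mp hVint
      obtain ⟨y, hy⟩ := IsIntegrallyClosed.isIntegral_iff.mp hQ
      rw [eq_intCast (algebraMap ℤ ℚ)] at hy
      have h3y : ((3 * y : ℤ) : ℚ) = ((49 : ℤ) : ℚ) := by
        push_cast
        rw [hy]
        ring
      have : (3 * y : ℤ) = 49 := Int.cast_injective h3y
      omega
    · linear_combination h
  have hgoal : ∑ z : F, ζ ^ ((Algebra.trace (ZMod 5) F) (z ^ 3)).val = ∑ z : F, ψ (z ^ 3) :=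
    Finset.sum_congr rfl fun z _ => (hψapp _).symm
  rw [hgoal, hS2, hGval]
  norm_num

end Aux

/-- **An extremal negative cubic additive character sum over `F_625`.** With
`χ(x) = ζ₅^{Tr(x)}` the canonical additive character of the field with `625` elements
(`Tr` the field trace to `F_5 = ZMod 5`, `ζ₅ = e^{2πi/5}`), one has
`∑_{z ∈ F_625} χ(z³) = −50 = −2·√625`. -/
theorem cubic_additive_sum_625
    (F : Type) [Field F] [Fintype F] [Algebra (ZMod 5) F]
    (hF : Fintype.card F = 625) :
    ∑ z : F, Complex.exp (2 * Real.pi * Complex.I / 5) ^ ((Algebra.trace (ZMod 5) F) (z ^ 3)).val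
      = -50 ∧ (-50 : ℂ) = -2 * Real.sqrt 625 := by
  refine ⟨aux_cubic_sum F hF, ?_⟩
  have h25 : Real.sqrt 625 = 25 := by
    rw [show (625:ℝ) = 25 ^ 2 by norm_num, Real.sqrt_sq (by norm_num)]
  rw [h25]
  norm_num
end

section
/- Let F_625 be the finite field with 625 elements, Tr : F_625 → F_5 the field trace, ζ₅ = e^{2πi/5} ∈ ℂ, and χ(x) = ζ₅^{Tr(x)} the canonical additive character. Then for every multiplicative character ψ of F_625 of order 3, the Gauss sum satisfies G(ψ, χ) = Σ_{y ∈ F_625^*} ψ(y) χ(y) = −25. -/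
open Finset

/-- **Gauss sums of cubic characters over `F_625`.** With `χ(x) = ζ₅^{Tr(x)}` the
canonical additive character of the field with `625` elements, every multiplicative
character `ψ` of order `3` (a homomorphism `F_625^* →* ℂ^*`) satisfies
`G(ψ, χ) = ∑_{y ∈ F_625^*} ψ(y) χ(y) = −25`. -/
theorem gauss_sum_cubic_625
    (F : Type) [Field F] [Fintype F] [DecidableEq F] [Algebra (ZMod 5) F]
    (hF : Fintype.card F = 625)
    (ψ : Fˣ →* ℂˣ) (hψord : orderOf ψ = 3) :
    ∑ y : Fˣ, ((ψ y : ℂˣ) : ℂ) *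
        Complex.exp (2 * Real.pi * Complex.I / 5) ^ ((Algebra.trace (ZMod 5) F) (y : F)).val
      = -25 := by
  classical
  haveI hfact : Fact (Nat.Prime 5) := ⟨by norm_num⟩
  haveI hchar : CharP F 5 := charP_of_injective_algebraMap (algebraMap (ZMod 5) F).injective 5
  haveI : ExpChar F 5 := ExpChar.prime (by norm_num)
  haveI : Module.Finite (ZMod 5) F := Module.Finite.of_finite
  haveI : Algebra.IsSeparable (ZMod 5) F := inferInstance
  -- the 5th root of unity
  set ζ : ℂ := Complex.exp (2 * Real.pi * Complex.I / 5) with hζdef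
  have hζprim : IsPrimitiveRoot ζ 5 := by
    have := Complex.isPrimitiveRoot_exp 5 (by norm_num)
    simpa using this
  have hζ5 : ζ ^ 5 = 1 := hζprim.pow_eq_one
  -- the additive character
  set χ : AddChar F ℂ :=
    (AddChar.zmodChar 5 hζ5).compAddMonoidHom (Algebra.trace (ZMod 5) F).toAddMonoidHom with hχdef
  have hχapp : ∀ x : F, χ x = ζ ^ (Algebra.trace (ZMod 5) F x).val := by
    intro x
    rw [hχdef, AddChar.compAddMonoidHom_apply, AddChar.zmodChar_apply]
    rfl
  have hχne : χ ≠ 1 := by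
    obtain ⟨x, hx⟩ := Algebra.trace_surjective (ZMod 5) F 1
    intro h
    have h1 : χ x = 1 := by rw [h]; simp
    rw [hχapp, hx] at h1
    have : (1 : ZMod 5).val = 1 := rfl
    rw [this, pow_one] at h1
    exact hζprim.ne_one (by norm_num) h1
  have hχprim : χ.IsPrimitive := AddChar.IsPrimitive.of_ne_one hχne
  -- the multiplicative character
  set Ψ : MulChar F ℂ := MulChar.ofUnitHom ψ with hΨdef
  have hΨcoe : ∀ y : Fˣ, Ψ (y : F) = ψ y := fun y => MulChar.ofUnitHom_coe ψ y
  have hψ3 : ψ ^ 3 = 1 := by rw [← hψord]; exact pow_orderOf_eq_one ψ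
  have hψval3 : ∀ y : Fˣ, ((ψ y : ℂˣ) : ℂ) ^ 3 = 1 := by
    intro y
    have : (ψ ^ 3) y = 1 := by rw [hψ3]; rfl
    have h2 : (ψ y) ^ 3 = 1 := by
      rw [← this]; rfl
    have h3 := congrArg (Units.val) h2
    push_cast at h3
    exact h3
  have hΨ3 : Ψ ^ 3 = 1 := by
    apply MulChar.ext
    intro a
    rw [MulChar.pow_apply_coe, hΨcoe, MulChar.one_apply_coe]
    exact hψval3 a
  have hΨne : Ψ ≠ 1 := by
    intro h
    have hψ1 : ψ = 1 := by
      ext y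
      have := MulChar.ext_iff.mp h y
      rw [hΨcoe, MulChar.one_apply_coe] at this
      exact this
    rw [hψ1, orderOf_one] at hψord
    norm_num at hψord
  -- sum over units
  have herase : ∀ f : F → ℂ,
      ∑ a ∈ (Finset.univ : Finset F).erase 0, f a = ∑ y : Fˣ, f y := by
    intro f
    refine Finset.sum_bij' (fun a ha => Units.mk0 a (Finset.ne_of_mem_erase ha))
      (fun y _ => (y : F)) ?_ ?_ ?_ ?_ ?_
    · intro a ha; exact Finset.mem_univ _
    · intro y _; exact Finset.mem_erase.mpr ⟨y.ne_zero, Finset.mem_univ _⟩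
    · intro a ha; rfl
    · intro y _; exact Units.ext rfl
    · intro a ha; rfl
  have hunits : ∀ Φ : MulChar F ℂ, gaussSum Φ χ = ∑ y : Fˣ, Φ (y : F) * χ (y : F) := by
    intro Φ
    have h0 : (fun a : F => Φ a * χ a) 0 = 0 := by simp [MulChar.map_zero]
    rw [gaussSum, ← Finset.sum_erase (f := fun a : F => Φ a * χ a) Finset.univ h0,
      herase (fun a => Φ a * χ a)]
  -- the Gauss sum
  set G : ℂ := gaussSum Ψ χ with hGdef
  have hGsum : G = ∑ y : Fˣ, ((ψ y : ℂˣ) : ℂ) * ζ ^ ((Algebra.trace (ZMod 5) F) (y : F)).val := by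
    rw [hGdef, hunits]
    exact Finset.sum_congr rfl fun y _ => by rw [hΨcoe, hχapp]
  -- Frobenius invariance of the trace
  have hcomm : ∀ r : ZMod 5,
      frobeniusEquiv F 5 (algebraMap (ZMod 5) F r) = algebraMap (ZMod 5) F r := by
    intro r
    rw [frobeniusEquiv_def, ← map_pow, ZMod.pow_card]
  have htr : ∀ x : F, Algebra.trace (ZMod 5) F (x ^ 5) = Algebra.trace (ZMod 5) F x := by
    intro x
    have h := Algebra.trace_eq_of_algEquiv (AlgEquiv.ofRingEquiv hcomm) x
    rwa [AlgEquiv.ofRingEquiv_apply, frobeniusEquiv_def] at h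
  have hfrob : gaussSum (Ψ ^ 5) χ = G := by
    rw [hGdef, gaussSum, gaussSum]
    refine Fintype.sum_bijective _ (frobeniusEquiv F 5).bijective _ _ fun x => ?_
    rw [frobeniusEquiv_def]
    rw [MulChar.pow_apply' Ψ (by norm_num) x, ← map_pow]
    congr 1
    rw [hχapp, hχapp, htr]
  have hΨ5 : Ψ ^ 5 = Ψ⁻¹ := by
    have h2 : Ψ ^ 5 = Ψ ^ 3 * Ψ ^ 2 := by rw [← pow_add]
    rw [h2, hΨ3, one_mul]
    refine inv_eq_of_mul_eq_one_right ?_ |>.symm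
    rw [← pow_succ']
    exact hΨ3
  have hGinv : gaussSum Ψ⁻¹ χ = G := by rw [← hΨ5, hfrob]
  -- Ψ(-1) = 1
  have hneg : Ψ⁻¹ (-1 : F) = 1 := by
    have hu : ((-1 : Fˣ) : F) = (-1 : F) := by simp
    rw [← hu, MulChar.inv_apply_eq_inv, hΨcoe]
    have h2 : (ψ (-1)) ^ 2 = 1 := by
      rw [← map_pow]; norm_num
    have h3 : (ψ (-1)) ^ 3 = 1 := by
      have : (ψ ^ 3) (-1) = 1 := by rw [hψ3]; rfl
      rw [← this]; rfl
    have h1 : ψ (-1) = 1 := by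
      have := h3
      rw [pow_succ, h2, one_mul] at this
      exact this
    rw [h1]
    simp
  -- G * G = 625
  have hprod : G * G = 625 := by
    have hmain := gaussSum_mul_gaussSum_eq_card hΨne hχprim
    have hshift := mul_gaussSum_inv_eq_gaussSum Ψ⁻¹ χ
    rw [hneg, one_mul, hGinv] at hshift
    rw [hshift] at hmain
    rw [hGdef, hmain, hF]
    norm_num
  -- the cube root of unity
  set ω : ℂ := Complex.exp (2 * Real.pi * Complex.I / 3) with hωdef
  have hωprim : IsPrimitiveRoot ω 3 := by
    have := Complex.isPrimitiveRoot_exp 3 (by norm_num)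
    simpa using this
  have hω3 : ω ^ 3 = 1 := hωprim.pow_eq_one
  have hωne1 : ω ≠ 1 := hωprim.ne_one (by norm_num)
  have hω2 : ω ^ 2 + ω + 1 = 0 := by
    have h : (ω - 1) * (ω ^ 2 + ω + 1) = 0 := by linear_combination hω3
    rcases mul_eq_zero.mp h with h | h
    · exact absurd (sub_eq_zero.mp h) hωne1
    · exact h
  -- classification of cube roots of unity
  have hcube : ∀ t : ℂ, t ^ 3 = 1 → t = 1 ∨ t = ω ∨ t = ω ^ 2 := by
    intro t ht
    have h : (t - 1) * ((t - ω) * (t - ω ^ 2)) = 0 := by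
      linear_combination ht + (t - t ^ 2) * hω2 + (t - 1) * hω3
    rcases mul_eq_zero.mp h with h | h
    · exact Or.inl (sub_eq_zero.mp h)
    · rcases mul_eq_zero.mp h with h | h
      · exact Or.inr (Or.inl (sub_eq_zero.mp h))
      · exact Or.inr (Or.inr (sub_eq_zero.mp h))
  -- integrality
  set R : Subalgebra ℤ ℂ := integralClosure ℤ ℂ with hRdef
  have hωR : ω ∈ R := by
    refine ⟨Polynomial.X ^ 3 - Polynomial.C 1, Polynomial.monic_X_pow_sub_C 1 (by norm_num), ?_⟩
    simp [hω3]
  have hζR : ζ ∈ R := by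
    refine ⟨Polynomial.X ^ 5 - Polynomial.C 1, Polynomial.monic_X_pow_sub_C 1 (by norm_num), ?_⟩
    simp [hζ5]
  have hχR : ∀ x : F, χ x ∈ R := by
    intro x
    rw [hχapp]
    exact pow_mem hζR _
  -- each (ψ y - 1) is (ω - 1) times an algebraic integer
  have hkey : ∀ y : Fˣ, ∃ c : ℂ, c ∈ R ∧ ((ψ y : ℂˣ) : ℂ) - 1 = (ω - 1) * c := by
    intro y
    rcases hcube _ (hψval3 y) with h | h | h
    · exact ⟨0, zero_mem R, by rw [h]; ring⟩
    · exact ⟨1, one_mem R, by rw [h]; ring⟩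
    · exact ⟨ω + 1, add_mem hωR (one_mem R), by rw [h]; ring⟩
  choose c hcR hc using hkey
  -- sum of the additive character over units is -1
  have hT : ∑ y : Fˣ, χ (y : F) = -1 := by
    have h0 := AddChar.sum_eq_zero_of_ne_one hχne
    have hsplit : ∑ a ∈ (Finset.univ : Finset F).erase 0, χ a + χ 0 = ∑ a : F, χ a :=
      Finset.sum_erase_add _ _ (Finset.mem_univ 0)
    rw [h0, herase (fun a => χ a)] at hsplit
    rw [AddChar.map_zero_eq_one] at hsplit
    linear_combination hsplit
  -- D
  set D : ℂ := ∑ y : Fˣ, c y * χ (y : F) with hDdef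
  have hDR : D ∈ R := Subalgebra.sum_mem R fun y _ => mul_mem (hcR y) (hχR _)
  have hD : (ω - 1) * D = G + 1 := by
    rw [hDdef, Finset.mul_sum]
    have : ∀ y : Fˣ, (ω - 1) * (c y * χ (y : F))
        = ((ψ y : ℂˣ) : ℂ) * χ (y : F) - χ (y : F) := by
      intro y
      rw [← mul_assoc, ← hc y]
      ring
    rw [Finset.sum_congr rfl fun y _ => this y, Finset.sum_sub_distrib, hT]
    have : ∑ y : Fˣ, ((ψ y : ℂˣ) : ℂ) * χ (y : F) = G := by
      rw [hGsum]
      exact Finset.sum_congr rfl fun y _ => by rw [hχapp]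
    rw [this]
    ring
  -- conclude
  rw [← hGsum]
  have hfac : (G - 25) * (G + 25) = 0 := by linear_combination hprod
  rcases mul_eq_zero.mp hfac with h | h
  · -- G = 25 is impossible
    exfalso
    have hG25 : G = 25 := by linear_combination h
    have hD26 : (ω - 1) * D = 26 := by rw [hD, hG25]; norm_num
    set r : ℂ := D ^ 2 * ω with hrdef
    have hrR : r ∈ R := mul_mem (pow_mem hDR 2) hωR
    have hr : r = (-676) / 3 := by
      rw [eq_div_iff (by norm_num : (3 : ℂ) ≠ 0)]
      linear_combination -((ω - 1) * D + 26) * hD26 + D ^ 2 * hω2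
    have hint : IsIntegral ℤ ((algebraMap ℚ ℂ) ((-676 : ℚ) / 3)) := by
      have : (algebraMap ℚ ℂ) ((-676 : ℚ) / 3) = r := by
        rw [hr]
        push_cast
        norm_num
      rw [this]
      exact hrR
    have hint2 : IsIntegral ℤ ((-676 : ℚ) / 3) :=
      (isIntegral_algebraMap_iff (algebraMap ℚ ℂ).injective).mp hint
    obtain ⟨y, hy⟩ := IsIntegrallyClosed.isIntegral_iff.mp hint2
    have hy' : (y : ℚ) = (-676 : ℚ) / 3 := by exact_mod_cast hy
    have h3y : (3 * y : ℚ) = -676 := by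
      rw [hy']; ring
    have : (3 * y : ℤ) = -676 := by exact_mod_cast h3y
    omega
  · linear_combination h
end

section
/- Let F_25 be the finite field with 25 elements. Then for every multiplicative character ψ of F_25 of order 8 (extended to F_25 by ψ(0) = 0), the character sum S = Σ_{z ∈ F_25} ψ((z+1)(z−1)) has absolute value |S| = 5 = √25; moreover, there exists a multiplicative character ψ of F_25 of order 8 for which S = 5 exactly. -/
open Finset

private lemma sum5 {M : Type*} [AddCommMonoid M] (h : ZMod 5 → M) :
    ∑ x, h x = h 0 + h 1 + h 2 + h 3 + h 4 := Fin.sum_univ_five h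

private lemma sum25' (h : ZMod 5 → ZMod 5 → ℂ) :
    (∑ p : ZMod 5 × ZMod 5, h p.1 p.2) =
      h 0 0 + h 0 1 + h 0 2 + h 0 3 + h 0 4 + h 1 0 + h 1 1 + h 1 2 + h 1 3 + h 1 4 +
      h 2 0 + h 2 1 + h 2 2 + h 2 3 + h 2 4 + h 3 0 + h 3 1 + h 3 2 + h 3 3 + h 3 4 +
      h 4 0 + h 4 1 + h 4 2 + h 4 3 + h 4 4 := by
  rw [Fintype.sum_prod_type]
  simp only [sum5]
  ring

set_option maxHeartbeats 2000000 in
private lemma key_sum (F : Type) [Field F] [Fintype F]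
    (hF : Fintype.card F = 25) (ψ : MulChar F ℂ) (h8 : orderOf ψ = 8) :
    (∑ z : F, ψ ((z + 1) * (z - 1))) = 5 := by
  have hchar := ringChar.charP F
  obtain ⟨n, hp, hc⟩ := FiniteField.card F (ringChar F)
  rw [hF] at hc
  have hp5 : ringChar F = 5 := by
    have hdvd : ringChar F ∣ 5 ^ 2 := by
      rw [show (5:ℕ)^2 = 25 by norm_num, hc]; exact dvd_pow_self (ringChar F) n.pos.ne'
    exact (Nat.prime_dvd_prime_iff_eq hp (by norm_num)).mp (hp.dvd_of_dvd_pow hdvd)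
  haveI h5I : CharP F 5 := hp5 ▸ hchar
  have h5 : (5 : F) = 0 := by
    have := CharP.cast_eq_zero F 5
    exact_mod_cast this
  have h2ne : (2 : F) ≠ 0 := by
    intro h
    exact one_ne_zero (α := F) (by linear_combination h5 - 2*h)
  obtain ⟨s, hs'⟩ : IsSquare (2 : F) := by
    rw [FiniteField.isSquare_iff (by rw [hp5]; norm_num) h2ne, hF]
    norm_num
    linear_combination (819 : F) * h5
  have hs : s^2 = 2 := by rw [sq]; exact hs'.symm
  have hnosq : ∀ x y : ZMod 5, x ≠ 0 → x^2 * 2 ≠ y^2 := by decide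
  haveI : Fact (Nat.Prime 5) := ⟨by norm_num⟩
  set c : ZMod 5 →+* F := ZMod.castHom dvd_rfl F with hcdef
  have hcinj : Function.Injective c := c.injective
  have hc0 : c 0 = 0 := map_zero c
  have hc1 : c 1 = 1 := map_one c
  have hc2 : c 2 = 2 := map_ofNat c 2
  have hc3 : c 3 = 3 := map_ofNat c 3
  have hc4 : c 4 = 4 := map_ofNat c 4
  have hinj : Function.Injective (fun p : ZMod 5 × ZMod 5 => c p.1 + c p.2 * s) := by
    rintro ⟨a, b⟩ ⟨a', b'⟩ h
    dsimp only at h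
    by_cases hb : b = b'
    · subst hb
      have ha : a = a' := hcinj (by linear_combination h)
      simp [ha]
    · exfalso
      have hbne : b' - b ≠ 0 := sub_ne_zero.mpr (Ne.symm hb)
      have h1 : c (b' - b) * s = c (a - a') := by
        rw [map_sub, map_sub]; linear_combination -h
      have h2 : c ((b' - b)^2 * 2) = c ((a - a')^2) := by
        rw [map_mul, map_pow, map_pow, hc2]
        linear_combination (c (b' - b) * s + c (a - a')) * h1 - c (b' - b)^2 * hs
      exact hnosq _ _ hbne (hcinj h2)
  have hcard : Fintype.card (ZMod 5 × ZMod 5) = Fintype.card F := by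
    rw [Fintype.card_prod, ZMod.card, hF]
  have hbij : Function.Bijective (fun p : ZMod 5 × ZMod 5 => c p.1 + c p.2 * s) :=
    (Fintype.bijective_iff_injective_and_card _).mpr ⟨hinj, hcard⟩
  have pw1 : (1 + 2*s)^1 = (1 : F) + (2 : F) * s := by rw [pow_one]
  have pw2 : (1 + 2*s)^2 = (4 : F) + (4 : F) * s := by
    rw [pow_succ, pw1]; linear_combination (2*2 : F) * hs + (1 : F) * h5
  have pw3 : (1 + 2*s)^3 = (0 : F) + (2 : F) * s := by
    rw [pow_succ, pw2]; linear_combination (2*4 : F) * hs + (4 : F) * h5 + (2 : F) * s * h5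
  have pw4 : (1 + 2*s)^4 = (3 : F) + (2 : F) * s := by
    rw [pow_succ, pw3]; linear_combination (2*2 : F) * hs + (1 : F) * h5
  have pw5 : (1 + 2*s)^5 = (1 : F) + (3 : F) * s := by
    rw [pow_succ, pw4]; linear_combination (2*2 : F) * hs + (2 : F) * h5 + (1 : F) * s * h5
  have pw6 : (1 + 2*s)^6 = (3 : F) + (0 : F) * s := by
    rw [pow_succ, pw5]; linear_combination (2*3 : F) * hs + (2 : F) * h5 + (1 : F) * s * h5
  have pw7 : (1 + 2*s)^7 = (3 : F) + (1 : F) * s := by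
    rw [pow_succ, pw6]; linear_combination (2*0 : F) * hs + (1 : F) * s * h5
  have pw8 : (1 + 2*s)^8 = (2 : F) + (2 : F) * s := by
    rw [pow_succ, pw7]; linear_combination (2*1 : F) * hs + (1 : F) * h5 + (1 : F) * s * h5
  have pw9 : (1 + 2*s)^9 = (0 : F) + (1 : F) * s := by
    rw [pow_succ, pw8]; linear_combination (2*2 : F) * hs + (2 : F) * h5 + (1 : F) * s * h5
  have pw10 : (1 + 2*s)^10 = (4 : F) + (1 : F) * s := by
    rw [pow_succ, pw9]; linear_combination (2*1 : F) * hs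
  have pw11 : (1 + 2*s)^11 = (3 : F) + (4 : F) * s := by
    rw [pow_succ, pw10]; linear_combination (2*1 : F) * hs + (1 : F) * h5 + (1 : F) * s * h5
  have pw12 : (1 + 2*s)^12 = (4 : F) + (0 : F) * s := by
    rw [pow_succ, pw11]; linear_combination (2*4 : F) * hs + (3 : F) * h5 + (2 : F) * s * h5
  have pw13 : (1 + 2*s)^13 = (4 : F) + (3 : F) * s := by
    rw [pow_succ, pw12]; linear_combination (2*0 : F) * hs + (1 : F) * s * h5
  have pw14 : (1 + 2*s)^14 = (1 : F) + (1 : F) * s := by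
    rw [pow_succ, pw13]; linear_combination (2*3 : F) * hs + (3 : F) * h5 + (2 : F) * s * h5
  have pw15 : (1 + 2*s)^15 = (0 : F) + (3 : F) * s := by
    rw [pow_succ, pw14]; linear_combination (2*1 : F) * hs + (1 : F) * h5
  have pw16 : (1 + 2*s)^16 = (2 : F) + (3 : F) * s := by
    rw [pow_succ, pw15]; linear_combination (2*3 : F) * hs + (2 : F) * h5
  have pw17 : (1 + 2*s)^17 = (4 : F) + (2 : F) * s := by
    rw [pow_succ, pw16]; linear_combination (2*3 : F) * hs + (2 : F) * h5 + (1 : F) * s * h5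
  have pw18 : (1 + 2*s)^18 = (2 : F) + (0 : F) * s := by
    rw [pow_succ, pw17]; linear_combination (2*2 : F) * hs + (2 : F) * h5 + (2 : F) * s * h5
  have pw19 : (1 + 2*s)^19 = (2 : F) + (4 : F) * s := by
    rw [pow_succ, pw18]; linear_combination (2*0 : F) * hs
  have pw20 : (1 + 2*s)^20 = (3 : F) + (3 : F) * s := by
    rw [pow_succ, pw19]; linear_combination (2*4 : F) * hs + (3 : F) * h5 + (1 : F) * s * h5
  have pw21 : (1 + 2*s)^21 = (0 : F) + (4 : F) * s := by
    rw [pow_succ, pw20]; linear_combination (2*3 : F) * hs + (3 : F) * h5 + (1 : F) * s * h5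
  have pw22 : (1 + 2*s)^22 = (1 : F) + (4 : F) * s := by
    rw [pow_succ, pw21]; linear_combination (2*4 : F) * hs + (3 : F) * h5
  have pw23 : (1 + 2*s)^23 = (2 : F) + (1 : F) * s := by
    rw [pow_succ, pw22]; linear_combination (2*4 : F) * hs + (3 : F) * h5 + (1 : F) * s * h5
  have cov01 : c 0 + c 1 * s = (1 + 2*s)^9 := by
    rw [hc0, hc1, pw9]
  have cov02 : c 0 + c 2 * s = (1 + 2*s)^3 := by
    rw [hc0, hc2, pw3]
  have cov03 : c 0 + c 3 * s = (1 + 2*s)^15 := by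
    rw [hc0, hc3, pw15]
  have cov04 : c 0 + c 4 * s = (1 + 2*s)^21 := by
    rw [hc0, hc4, pw21]
  have cov10 : c 1 + c 0 * s = (1 + 2*s)^0 := by
    rw [hc1, hc0, pow_zero]; ring
  have cov11 : c 1 + c 1 * s = (1 + 2*s)^14 := by
    rw [hc1, pw14]
  have cov12 : c 1 + c 2 * s = (1 + 2*s)^1 := by
    rw [hc1, hc2, pw1]
  have cov13 : c 1 + c 3 * s = (1 + 2*s)^5 := by
    rw [hc1, hc3, pw5]
  have cov14 : c 1 + c 4 * s = (1 + 2*s)^22 := by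
    rw [hc1, hc4, pw22]
  have cov20 : c 2 + c 0 * s = (1 + 2*s)^18 := by
    rw [hc2, hc0, pw18]
  have cov21 : c 2 + c 1 * s = (1 + 2*s)^23 := by
    rw [hc2, hc1, pw23]
  have cov22 : c 2 + c 2 * s = (1 + 2*s)^8 := by
    rw [hc2, pw8]
  have cov23 : c 2 + c 3 * s = (1 + 2*s)^16 := by
    rw [hc2, hc3, pw16]
  have cov24 : c 2 + c 4 * s = (1 + 2*s)^19 := by
    rw [hc2, hc4, pw19]
  have cov30 : c 3 + c 0 * s = (1 + 2*s)^6 := by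
    rw [hc3, hc0, pw6]
  have cov31 : c 3 + c 1 * s = (1 + 2*s)^7 := by
    rw [hc3, hc1, pw7]
  have cov32 : c 3 + c 2 * s = (1 + 2*s)^4 := by
    rw [hc3, hc2, pw4]
  have cov33 : c 3 + c 3 * s = (1 + 2*s)^20 := by
    rw [hc3, pw20]
  have cov34 : c 3 + c 4 * s = (1 + 2*s)^11 := by
    rw [hc3, hc4, pw11]
  have cov40 : c 4 + c 0 * s = (1 + 2*s)^12 := by
    rw [hc4, hc0, pw12]
  have cov41 : c 4 + c 1 * s = (1 + 2*s)^10 := by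
    rw [hc4, hc1, pw10]
  have cov42 : c 4 + c 2 * s = (1 + 2*s)^17 := by
    rw [hc4, hc2, pw17]
  have cov43 : c 4 + c 3 * s = (1 + 2*s)^13 := by
    rw [hc4, hc3, pw13]
  have cov44 : c 4 + c 4 * s = (1 + 2*s)^2 := by
    rw [hc4, pw2]
  have cov : ∀ x : F, x ≠ 0 → ∃ k : ℕ, x = (1 + 2*s)^k := by
    intro x hx
    obtain ⟨⟨a, b⟩, rfl⟩ := hbij.2 x
    dsimp only at hx ⊢
    obtain ⟨i, hi, rfl⟩ : ∃ i : ℕ, i < 5 ∧ (i : ZMod 5) = a :=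
      ⟨a.val, ZMod.val_lt a, ZMod.natCast_rightInverse a⟩
    obtain ⟨j, hj, rfl⟩ : ∃ j : ℕ, j < 5 ∧ (j : ZMod 5) = b :=
      ⟨b.val, ZMod.val_lt b, ZMod.natCast_rightInverse b⟩
    interval_cases i <;> interval_cases j <;>
      simp only [Nat.cast_zero, Nat.cast_one, Nat.cast_ofNat] at hx ⊢
    · exact absurd (show c 0 + c 0 * s = 0 by rw [hc0]; ring) hx
    · exact ⟨9, cov01⟩
    · exact ⟨3, cov02⟩
    · exact ⟨15, cov03⟩
    · exact ⟨21, cov04⟩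
    · exact ⟨0, cov10⟩
    · exact ⟨14, cov11⟩
    · exact ⟨1, cov12⟩
    · exact ⟨5, cov13⟩
    · exact ⟨22, cov14⟩
    · exact ⟨18, cov20⟩
    · exact ⟨23, cov21⟩
    · exact ⟨8, cov22⟩
    · exact ⟨16, cov23⟩
    · exact ⟨19, cov24⟩
    · exact ⟨6, cov30⟩
    · exact ⟨7, cov31⟩
    · exact ⟨4, cov32⟩
    · exact ⟨20, cov33⟩
    · exact ⟨11, cov34⟩
    · exact ⟨12, cov40⟩
    · exact ⟨10, cov41⟩
    · exact ⟨17, cov42⟩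
    · exact ⟨13, cov43⟩
    · exact ⟨2, cov44⟩
  have hgne : (1 + 2*s : F) ≠ 0 := by
    intro h
    exact one_ne_zero (α := F) (by linear_combination (2 - 4*s) * h + 8 * hs + 3 * h5)
  have hz8 : ψ (1 + 2*s) ^ 8 = 1 := by
    have h1 := pow_orderOf_eq_one ψ
    rw [h8] at h1
    calc ψ (1 + 2*s) ^ 8 = (ψ ^ 8) (1 + 2*s) := (MulChar.pow_apply' ψ (by norm_num) _).symm
    _ = (1 : MulChar F ℂ) (1 + 2*s) := by rw [h1]
    _ = 1 := MulChar.one_apply (isUnit_iff_ne_zero.mpr hgne)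
  have hz4 : ψ (1 + 2*s) ^ 4 = -1 := by
    have hsq : ψ (1 + 2*s) ^ 4 * ψ (1 + 2*s) ^ 4 = 1 := by
      rw [← pow_add]; exact hz8
    rcases mul_self_eq_one_iff.mp hsq with h | h
    · exfalso
      have hψ4 : ψ ^ 4 = 1 := by
        apply MulChar.ext
        intro u
        rw [MulChar.pow_apply_coe, MulChar.one_apply_coe]
        obtain ⟨k, hk⟩ := cov u (Units.ne_zero u)
        rw [hk, map_pow, ← pow_mul, mul_comm k 4, pow_mul, h, one_pow]
      have hd := orderOf_dvd_of_pow_eq_one hψ4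
      rw [h8] at hd
      norm_num at hd
    · exact h
  have step1 : (∑ z : F, ψ ((z + 1) * (z - 1))) =
      ∑ p : ZMod 5 × ZMod 5, ψ ((c p.1 + c p.2 * s + 1) * (c p.1 + c p.2 * s - 1)) :=
    (Fintype.sum_bijective _ hbij _ _ fun p => rfl).symm
  have step2 : (∑ p : ZMod 5 × ZMod 5, ψ ((c p.1 + c p.2 * s + 1) * (c p.1 + c p.2 * s - 1))) =
      ψ ((c 0 + c 0 * s + 1) * (c 0 + c 0 * s - 1)) + ψ ((c 0 + c 1 * s + 1) * (c 0 + c 1 * s - 1)) + ψ ((c 0 + c 2 * s + 1) * (c 0 + c 2 * s - 1)) + ψ ((c 0 + c 3 * s + 1) * (c 0 + c 3 * s - 1)) + ψ ((c 0 + c 4 * s + 1) * (c 0 + c 4 * s - 1)) + ψ ((c 1 + c 0 * s + 1) * (c 1 + c 0 * s - 1)) + ψ ((c 1 + c 1 * s + 1) * (c 1 + c 1 * s - 1)) + ψ ((c 1 + c 2 * s + 1) * (c 1 + c 2 * s - 1)) + ψ ((c 1 + c 3 * s + 1) * (c 1 + c 3 * s - 1)) + ψ ((c 1 + c 4 * s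 + 1) * (c 1 + c 4 * s - 1)) + ψ ((c 2 + c 0 * s + 1) * (c 2 + c 0 * s - 1)) + ψ ((c 2 + c 1 * s + 1) * (c 2 + c 1 * s - 1)) + ψ ((c 2 + c 2 * s + 1) * (c 2 + c 2 * s - 1)) + ψ ((c 2 + c 3 * s + 1) * (c 2 + c 3 * s - 1)) + ψ ((c 2 + c 4 * s + 1) * (c 2 + c 4 * s - 1)) + ψ ((c 3 + c 0 * s + 1) * (c 3 + c 0 * s - 1)) + ψ ((c 3 + c 1 * s + 1) * (c 3 + c 1 * s - 1)) + ψ ((c 3 + c 2 * s + 1) * (c 3 + c 2 * s - 1)) + ψ ((c 3 + c 3 * s + 1) * (c 3 + c 3 * s - 1)) + ψ ((c 3 + c 4 * s + 1) * (c 3 + c 4 * s - 1)) + ψ ((c 4 + c 0 * s + 1) * (c 4 + c 0 * s - 1)) + ψ ((c 4 + c 1 * s + 1) * (c 4 + c 1 * s - 1)) + ψ ((c 4 + c 2 * s + 1) * (c 4 + c 2 * s - 1)) + ψ ((c 4 + c 3 * s + 1) * (c 4 + c 3 * s - 1)) + ψ ((c 4 + c 4 * s + 1) * (c 4 + c 4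 * s - 1)) :=
    sum25' (fun a b => ψ ((c a + c b * s + 1) * (c a + c b * s - 1)))
  have t00 : ψ ((c 0 + c 0 * s + 1) * (c 0 + c 0 * s - 1)) = ψ (1 + 2*s) ^ 12 := by
    have h : (c 0 + c 0 * s + 1) * (c 0 + c 0 * s - 1) = (1 + 2*s)^12 := by
      rw [hc0, pw12]; linear_combination (-1 : F) * h5
    rw [h, map_pow]
  have t01 : ψ ((c 0 + c 1 * s + 1) * (c 0 + c 1 * s - 1)) = ψ (1 + 2*s) ^ 0 := by
    have h : (c 0 + c 1 * s + 1) * (c 0 + c 1 * s - 1) = (1 + 2*s)^0 := by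
      rw [hc0, hc1, pow_zero]; linear_combination (1 : F) * hs
    rw [h, map_pow]
  have t02 : ψ ((c 0 + c 2 * s + 1) * (c 0 + c 2 * s - 1)) = ψ (1 + 2*s) ^ 18 := by
    have h : (c 0 + c 2 * s + 1) * (c 0 + c 2 * s - 1) = (1 + 2*s)^18 := by
      rw [hc0, hc2, pw18]; linear_combination (4 : F) * hs + (1 : F) * h5
    rw [h, map_pow]
  have t03 : ψ ((c 0 + c 3 * s + 1) * (c 0 + c 3 * s - 1)) = ψ (1 + 2*s) ^ 18 := by
    have h : (c 0 + c 3 * s + 1) * (c 0 + c 3 * s - 1) = (1 + 2*s)^18 := by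
      rw [hc0, hc3, pw18]; linear_combination (9 : F) * hs + (3 : F) * h5
    rw [h, map_pow]
  have t04 : ψ ((c 0 + c 4 * s + 1) * (c 0 + c 4 * s - 1)) = ψ (1 + 2*s) ^ 0 := by
    have h : (c 0 + c 4 * s + 1) * (c 0 + c 4 * s - 1) = (1 + 2*s)^0 := by
      rw [hc0, hc4, pow_zero]; linear_combination (16 : F) * hs + (6 : F) * h5
    rw [h, map_pow]
  have t10 : ψ ((c 1 + c 0 * s + 1) * (c 1 + c 0 * s - 1)) = 0 := by
    have h : (c 1 + c 0 * s + 1) * (c 1 + c 0 * s - 1) = 0 := by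
      rw [hc1, hc0]; ring
    rw [h, MulChar.map_zero]
  have t11 : ψ ((c 1 + c 1 * s + 1) * (c 1 + c 1 * s - 1)) = ψ (1 + 2*s) ^ 8 := by
    have h : (c 1 + c 1 * s + 1) * (c 1 + c 1 * s - 1) = (1 + 2*s)^8 := by
      rw [hc1, pw8]; linear_combination (1 : F) * hs
    rw [h, map_pow]
  have t12 : ψ ((c 1 + c 2 * s + 1) * (c 1 + c 2 * s - 1)) = ψ (1 + 2*s) ^ 11 := by
    have h : (c 1 + c 2 * s + 1) * (c 1 + c 2 * s - 1) = (1 + 2*s)^11 := by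
      rw [hc1, hc2, pw11]; linear_combination (4 : F) * hs + (1 : F) * h5
    rw [h, map_pow]
  have t13 : ψ ((c 1 + c 3 * s + 1) * (c 1 + c 3 * s - 1)) = ψ (1 + 2*s) ^ 7 := by
    have h : (c 1 + c 3 * s + 1) * (c 1 + c 3 * s - 1) = (1 + 2*s)^7 := by
      rw [hc1, hc3, pw7]; linear_combination (9 : F) * hs + (3 : F) * h5 + (1 : F) * s * h5
    rw [h, map_pow]
  have t14 : ψ ((c 1 + c 4 * s + 1) * (c 1 + c 4 * s - 1)) = ψ (1 + 2*s) ^ 16 := by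
    have h : (c 1 + c 4 * s + 1) * (c 1 + c 4 * s - 1) = (1 + 2*s)^16 := by
      rw [hc1, hc4, pw16]; linear_combination (16 : F) * hs + (6 : F) * h5 + (1 : F) * s * h5
    rw [h, map_pow]
  have t20 : ψ ((c 2 + c 0 * s + 1) * (c 2 + c 0 * s - 1)) = ψ (1 + 2*s) ^ 6 := by
    have h : (c 2 + c 0 * s + 1) * (c 2 + c 0 * s - 1) = (1 + 2*s)^6 := by
      rw [hc2, hc0, pw6]; ring
    rw [h, map_pow]
  have t21 : ψ ((c 2 + c 1 * s + 1) * (c 2 + c 1 * s - 1)) = ψ (1 + 2*s) ^ 21 := by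
    have h : (c 2 + c 1 * s + 1) * (c 2 + c 1 * s - 1) = (1 + 2*s)^21 := by
      rw [hc2, hc1, pw21]; linear_combination (1 : F) * hs + (1 : F) * h5
    rw [h, map_pow]
  have t22 : ψ ((c 2 + c 2 * s + 1) * (c 2 + c 2 * s - 1)) = ψ (1 + 2*s) ^ 5 := by
    have h : (c 2 + c 2 * s + 1) * (c 2 + c 2 * s - 1) = (1 + 2*s)^5 := by
      rw [hc2, pw5]; linear_combination (4 : F) * hs + (2 : F) * h5 + (1 : F) * s * h5
    rw [h, map_pow]
  have t23 : ψ ((c 2 + c 3 * s + 1) * (c 2 + c 3 * s - 1)) = ψ (1 + 2*s) ^ 1 := by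
    have h : (c 2 + c 3 * s + 1) * (c 2 + c 3 * s - 1) = (1 + 2*s)^1 := by
      rw [hc2, hc3, pw1]; linear_combination (9 : F) * hs + (4 : F) * h5 + (2 : F) * s * h5
    rw [h, map_pow]
  have t24 : ψ ((c 2 + c 4 * s + 1) * (c 2 + c 4 * s - 1)) = ψ (1 + 2*s) ^ 9 := by
    have h : (c 2 + c 4 * s + 1) * (c 2 + c 4 * s - 1) = (1 + 2*s)^9 := by
      rw [hc2, hc4, pw9]; linear_combination (16 : F) * hs + (7 : F) * h5 + (3 : F) * s * h5
    rw [h, map_pow]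
  have t30 : ψ ((c 3 + c 0 * s + 1) * (c 3 + c 0 * s - 1)) = ψ (1 + 2*s) ^ 6 := by
    have h : (c 3 + c 0 * s + 1) * (c 3 + c 0 * s - 1) = (1 + 2*s)^6 := by
      rw [hc3, hc0, pw6]; linear_combination (1 : F) * h5
    rw [h, map_pow]
  have t31 : ψ ((c 3 + c 1 * s + 1) * (c 3 + c 1 * s - 1)) = ψ (1 + 2*s) ^ 9 := by
    have h : (c 3 + c 1 * s + 1) * (c 3 + c 1 * s - 1) = (1 + 2*s)^9 := by
      rw [hc3, hc1, pw9]; linear_combination (1 : F) * hs + (2 : F) * h5 + (1 : F) * s * h5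
    rw [h, map_pow]
  have t32 : ψ ((c 3 + c 2 * s + 1) * (c 3 + c 2 * s - 1)) = ψ (1 + 2*s) ^ 1 := by
    have h : (c 3 + c 2 * s + 1) * (c 3 + c 2 * s - 1) = (1 + 2*s)^1 := by
      rw [hc3, hc2, pw1]; linear_combination (4 : F) * hs + (3 : F) * h5 + (2 : F) * s * h5
    rw [h, map_pow]
  have t33 : ψ ((c 3 + c 3 * s + 1) * (c 3 + c 3 * s - 1)) = ψ (1 + 2*s) ^ 5 := by
    have h : (c 3 + c 3 * s + 1) * (c 3 + c 3 * s - 1) = (1 + 2*s)^5 := by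
      rw [hc3, pw5]; linear_combination (9 : F) * hs + (5 : F) * h5 + (3 : F) * s * h5
    rw [h, map_pow]
  have t34 : ψ ((c 3 + c 4 * s + 1) * (c 3 + c 4 * s - 1)) = ψ (1 + 2*s) ^ 21 := by
    have h : (c 3 + c 4 * s + 1) * (c 3 + c 4 * s - 1) = (1 + 2*s)^21 := by
      rw [hc3, hc4, pw21]; linear_combination (16 : F) * hs + (8 : F) * h5 + (4 : F) * s * h5
    rw [h, map_pow]
  have t40 : ψ ((c 4 + c 0 * s + 1) * (c 4 + c 0 * s - 1)) = 0 := by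
    have h : (c 4 + c 0 * s + 1) * (c 4 + c 0 * s - 1) = 0 := by
      rw [hc4, hc0]; linear_combination (3 : F) * h5
    rw [h, MulChar.map_zero]
  have t41 : ψ ((c 4 + c 1 * s + 1) * (c 4 + c 1 * s - 1)) = ψ (1 + 2*s) ^ 16 := by
    have h : (c 4 + c 1 * s + 1) * (c 4 + c 1 * s - 1) = (1 + 2*s)^16 := by
      rw [hc4, hc1, pw16]; linear_combination (1 : F) * hs + (3 : F) * h5 + (1 : F) * s * h5
    rw [h, map_pow]
  have t42 : ψ ((c 4 + c 2 * s + 1) * (c 4 + c 2 * s - 1)) = ψ (1 + 2*s) ^ 7 := by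
    have h : (c 4 + c 2 * s + 1) * (c 4 + c 2 * s - 1) = (1 + 2*s)^7 := by
      rw [hc4, hc2, pw7]; linear_combination (4 : F) * hs + (4 : F) * h5 + (3 : F) * s * h5
    rw [h, map_pow]
  have t43 : ψ ((c 4 + c 3 * s + 1) * (c 4 + c 3 * s - 1)) = ψ (1 + 2*s) ^ 11 := by
    have h : (c 4 + c 3 * s + 1) * (c 4 + c 3 * s - 1) = (1 + 2*s)^11 := by
      rw [hc4, hc3, pw11]; linear_combination (9 : F) * hs + (6 : F) * h5 + (4 : F) * s * h5
    rw [h, map_pow]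
  have t44 : ψ ((c 4 + c 4 * s + 1) * (c 4 + c 4 * s - 1)) = ψ (1 + 2*s) ^ 8 := by
    have h : (c 4 + c 4 * s + 1) * (c 4 + c 4 * s - 1) = (1 + 2*s)^8 := by
      rw [hc4, pw8]; linear_combination (16 : F) * hs + (9 : F) * h5 + (6 : F) * s * h5
    rw [h, map_pow]
  rw [step1, step2, t00, t01, t02, t03, t04, t10, t11, t12, t13, t14, t20, t21, t22, t23, t24, t30, t31, t32, t33, t34, t40, t41, t42, t43, t44]
  linear_combination ((-3 : ℂ) + (2 : ℂ) * ψ (1 + 2*s) ^ 1 + (3 : ℂ) * ψ (1 + 2*s) ^ 4 + (2 : ℂ) * ψ (1 + 2*s) ^ 6 + (2 : ℂ) * ψ (1 + 2*s) ^ 7 + (-1 : ℂ) * ψ (1 + 2*s) ^ 8 + (2 : ℂ) * ψ (1 + 2*s) ^ 9 + (-2 : ℂ) * ψ (1 + 2*s) ^ 10 + (2 : ℂ) * ψ (1 + 2*s) ^ 12 + (-2 : ℂ) * ψ (1 + 2*s) ^ 13 + (2 : ℂ) * ψ (1 + 2*s) ^ 14 + (2 : ℂ) * ψ (1 + 2*s)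 ^ 17) * hz4

/-- **Extremal multiplicative character sums over `F_25`.** For every multiplicative
character `ψ` of order `8` of the field `F` with `25` elements (extended by
`ψ(0) = 0`), the sum `S = ∑_{z ∈ F_25} ψ((z+1)(z−1))` has absolute value
`|S| = 5 = √25`; moreover there is an order-`8` multiplicative character for which
`S = 5` exactly. -/
theorem extremal_mult_char_sum_25
    (F : Type) [Field F] [Fintype F]
    (hF : Fintype.card F = 25) :
    (∀ ψ : MulChar F ℂ, orderOf ψ = 8 →
      ‖∑ z : F, ψ ((z + 1) * (z - 1))‖ = 5)
    ∧ (∃ ψ : MulChar F ℂ, orderOf ψ = 8 ∧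
        (∑ z : F, ψ ((z + 1) * (z - 1))) = 5)
    ∧ (5 : ℝ) = Real.sqrt 25 := by
  refine ⟨fun ψ h8 => ?_, ?_, ?_⟩
  · rw [key_sum F hF ψ h8]
    simp
  · obtain ⟨ψ, hψ⟩ := MulChar.exists_mulChar_orderOf F (n := 8) (R := ℂ)
      (by rw [hF]; norm_num) (Complex.isPrimitiveRoot_exp 8 (by norm_num))
    exact ⟨ψ, hψ, key_sum F hF ψ hψ⟩
  · rw [show (25:ℝ) = 5^2 by norm_num, Real.sqrt_sq (by norm_num)]
end

section
/- Let F_625 be the finite field with 625 elements, Tr : F_625 → F_5 the field trace, ζ₅ = e^{2πi/5} ∈ ℂ, χ(x) = ζ₅^{Tr(x)} the canonical additive character, and g any generator of F_625^*. Then Σ_{y=0}^{623} χ((g+1)·g^{3y} + g·g^{2y} + g^{y}) · conj(χ(g·g^{3y} + g·g^{2y} + g^{y})) = −51. In particular, this periodic correlation value of Construction 1 (with parameters (α₁,β₁,η₁) = (g+1, g, 1), (α₂,β₂,η₂) = (g, g, 1), τ = 0, p = 5, n = 2) has magnitude exactly 2·p^{n} + 1 = 51, so the correlation bound δ_max ≤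 2p^{n}+1 is attained with equality. -/
open Finset

noncomputable def zet : ℂ := Complex.exp (2 * Real.pi * Complex.I / 5)

lemma zet_pow_five : zet ^ (5:ℕ) = 1 := by
  rw [zet, ← Complex.exp_nat_mul]
  rw [show (5:ℕ) * (2 * ↑Real.pi * Complex.I / 5) = 2 * ↑Real.pi * Complex.I by push_cast; ring]
  exact Complex.exp_two_pi_mul_I

lemma zet_ne_one : zet ≠ 1 := by
  intro h
  rw [zet, Complex.exp_eq_one_iff] at h
  obtain ⟨n, hn⟩ := h
  have hπ : (Real.pi : ℂ) ≠ 0 := by exact_mod_cast Real.pi_ne_zero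
  have h2 : (2 * Real.pi * Complex.I : ℂ) ≠ 0 := by
    simp [hπ, Complex.I_ne_zero]
  have h5 : ((5 * n : ℤ) : ℂ) * (2 * ↑Real.pi * Complex.I) = 1 * (2 * ↑Real.pi * Complex.I) := by
    push_cast
    linear_combination (-5:ℂ) * hn
  have h6 : ((5 * n : ℤ) : ℂ) = 1 := mul_right_cancel₀ h2 h5
  have : (5 * n : ℤ) = 1 := by exact_mod_cast h6
  omega

lemma zet_pow_mod (m : ℕ) : zet ^ m = zet ^ (m % 5) := by
  conv_lhs => rw [← Nat.div_add_mod m 5]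
  rw [pow_add, pow_mul, zet_pow_five, one_pow, one_mul]

lemma zet_pow_congr {m n : ℕ} (h : (m : ZMod 5) = (n : ZMod 5)) : zet ^ m = zet ^ n := by
  rw [ZMod.natCast_eq_natCast_iff] at h
  rw [zet_pow_mod m, zet_pow_mod n, h]

lemma conj_zet : (starRingEnd ℂ) zet = zet ^ (4:ℕ) := by
  have h1 : (starRingEnd ℂ) zet = Complex.exp (-(2 * ↑Real.pi * Complex.I / 5)) := by
    rw [zet, ← Complex.exp_conj]
    congr 1
    rw [map_div₀, map_mul, map_mul, Complex.conj_I, Complex.conj_ofReal,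
      map_ofNat, map_ofNat]
    ring
  have h2 : zet ^ (4:ℕ) = Complex.exp ((4:ℕ) * (2 * ↑Real.pi * Complex.I / 5)) := by
    rw [Complex.exp_nat_mul, zet]
  rw [h1, h2, Complex.exp_eq_exp_iff_exists_int]
  exact ⟨-1, by push_cast; ring⟩

lemma mul_conj_zet (a b : ZMod 5) :
    zet ^ a.val * (starRingEnd ℂ) (zet ^ b.val) = zet ^ (a - b).val := by
  rw [map_pow, conj_zet, ← pow_mul, ← pow_add]
  apply zet_pow_congr
  have h5 : (5 : ZMod 5) = 0 := by decide
  push_cast [ZMod.natCast_val, ZMod.cast_id]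
  linear_combination b * h5

lemma zet_sum : 1 + zet + zet ^ 2 + zet ^ 3 + zet ^ 4 = 0 := by
  have h := geom_sum_eq zet_ne_one 5
  rw [zet_pow_five] at h
  simp only [sub_self, zero_div] at h
  rw [show Finset.range 5 = ({0,1,2,3,4} : Finset ℕ) from by decide] at h
  rw [Finset.sum_insert (by decide), Finset.sum_insert (by decide),
    Finset.sum_insert (by decide), Finset.sum_insert (by decide),
    Finset.sum_singleton] at h
  linear_combination h

def Pc (u : ZMod 5) (v : Fin 4 → ZMod 5) : ZMod 5 :=
  4 * ((v 0)^3 + u*(6*(v 0)*(v 1)*(v 3) + 3*(v 0)*(v 2)^2 + 3*(v 1)^2*(v 2))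
      + u^2*(3*(v 2)*(v 3)^2))

set_option maxRecDepth 40000 in
lemma count2 : ∀ t : ZMod 5,
    (Finset.univ.filter (fun v : Fin 4 → ZMod 5 => Pc 2 v = t)).card
      = if t = 0 then 85 else 135 := by decide

set_option maxRecDepth 40000 in
lemma count3 : ∀ t : ZMod 5,
    (Finset.univ.filter (fun v : Fin 4 → ZMod 5 => Pc 3 v = t)).card
      = if t = 0 then 85 else 135 := by decide

lemma zmod5_sum (h : ZMod 5 → ℂ) : ∑ t : ZMod 5, h t = h 0 + h 1 + h 2 + h 3 + h 4 := by
  rw [show (Finset.univ : Finset (ZMod 5)) = {0,1,2,3,4} from by decide]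
  rw [Finset.sum_insert (by decide), Finset.sum_insert (by decide),
    Finset.sum_insert (by decide), Finset.sum_insert (by decide), Finset.sum_singleton]
  ring

set_option maxHeartbeats 1600000 in
set_option maxRecDepth 40000 in
/-- **An extremal correlation value of Construction 1 over `F_625`.** With
`χ(x) = ζ₅^{Tr(x)}` the canonical additive character of the field `F` with `625`
elements and `g` any generator of `F^*`, the periodic correlation sum with parameters
`(α₁,β₁,η₁) = (g+1, g, 1)`, `(α₂,β₂,η₂) = (g, g, 1)` and `τ = 0` equals `−51`,
whose magnitude `51 = 2·5² + 1` attains the bound `δ_max ≤ 2p^n + 1` with equality. -/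
theorem construction1_extremal_correlation_625
    (F : Type) [Field F] [Fintype F] [Algebra (ZMod 5) F]
    (hF : Fintype.card F = 625)
    (g : Fˣ) (hg : ∀ x : Fˣ, x ∈ Subgroup.zpowers g) :
    ∑ y ∈ Finset.range 624,
        (Complex.exp (2 * Real.pi * Complex.I / 5) ^
            ((Algebra.trace (ZMod 5) F)
              (((g : F) + 1) * (g : F) ^ (3 * y) + (g : F) * (g : F) ^ (2 * y) + (g : F) ^ y)).val) *
          (starRingEnd ℂ) (Complex.exp (2 * Real.pi * Complex.I / 5) ^
            ((Algebra.trace (ZMod 5) F)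
              ((g : F) * (g : F) ^ (3 * y) + (g : F) * (g : F) ^ (2 * y) + (g : F) ^ y)).val)
      = -51 := by
  classical
  haveI : Fact (Nat.Prime 5) := ⟨by norm_num⟩
  have hφinj : Function.Injective (algebraMap (ZMod 5) F) :=
    (algebraMap (ZMod 5) F).injective
  haveI hch : CharP F 5 := charP_of_injective_algebraMap hφinj 5
  have h5F : (5:F) = 0 := by
    have := CharP.cast_eq_zero F 5
    push_cast at this
    exact this
  -- the element r of multiplicative order 16
  have hcardU : Nat.card Fˣ = 624 := by
    rw [Nat.card_eq_fintype_card, Fintype.card_units, hF]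
  have horder : orderOf g = 624 := by
    rw [orderOf_eq_card_of_forall_mem_zpowers hg, hcardU]
  have h624 : g ^ (624:ℕ) = 1 := by rw [← horder]; exact pow_orderOf_eq_one g
  have h16u : (g ^ (39:ℕ)) ^ (16:ℕ) = 1 := by
    rw [← pow_mul, show 39*16 = 624 from by norm_num]; exact h624
  have h8u : (g ^ (39:ℕ)) ^ (8:ℕ) ≠ 1 := by
    intro h
    rw [← pow_mul, show 39*8 = 312 from by norm_num] at h
    have hdvd := orderOf_dvd_of_pow_eq_one h
    rw [horder] at hdvd
    norm_num at hdvd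
  set r : F := ((g ^ (39:ℕ) : Fˣ) : F) with hrdef
  have hrne : r ≠ 0 := Units.ne_zero _
  have hr16 : r ^ (16:ℕ) = 1 := by
    rw [hrdef, ← Units.val_pow_eq_pow_val, h16u, Units.val_one]
  have hr8 : r ^ (8:ℕ) = -1 := by
    have h0 : (r^8 - 1) * (r^8 + 1) = 0 := by linear_combination hr16
    rcases mul_eq_zero.mp h0 with h | h
    · exfalso
      apply h8u
      apply Units.ext
      rw [Units.val_pow_eq_pow_val, Units.val_one]
      have : r^8 = 1 := by linear_combination h
      exact this
    · linear_combination h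
  have hu2 : (r^4)^2 = -1 := by linear_combination hr8
  have h6F : (6:F) = 1 := by linear_combination h5F
  obtain ⟨u₀, hu₀or, hu⟩ : ∃ u₀ : ZMod 5, (u₀ = 2 ∨ u₀ = 3) ∧ r^4 = algebraMap (ZMod 5) F u₀ := by
    have hsplit : (r^4 - 2) * (r^4 - 3) = 0 := by
      linear_combination hu2 + h6F - r^4 * h5F
    rcases mul_eq_zero.mp hsplit with h | h
    · exact ⟨2, Or.inl rfl, by rw [map_ofNat]; exact sub_eq_zero.mp h⟩
    · exact ⟨3, Or.inr rfl, by rw [map_ofNat]; exact sub_eq_zero.mp h⟩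
  have huF : (algebraMap (ZMod 5) F u₀)^2 = -1 := by rw [← hu]; exact hu2
  have hr5 : r^5 = algebraMap (ZMod 5) F u₀ * r := by linear_combination r * hu
  have hr10 : r^10 = -r^2 := by
    linear_combination (r^6 + algebraMap (ZMod 5) F u₀ * r^2) * hu + r^2 * huF
  have hr15 : r^15 = -(algebraMap (ZMod 5) F u₀) * r^3 := by
    linear_combination (r^11 + algebraMap (ZMod 5) F u₀ * r^7 +
      (algebraMap (ZMod 5) F u₀)^2 * r^3) * hu + (algebraMap (ZMod 5) F u₀ * r^3) * huF
  set T := Algebra.trace (ZMod 5) F with hT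
  -- trace is Frobenius-invariant
  have hcomm : ∀ c : ZMod 5, (algebraMap (ZMod 5) F c) ^ 5 = algebraMap (ZMod 5) F c := by
    intro c; rw [← map_pow, ZMod.pow_card]
  have htr5 : ∀ x : F, T (x^5) = T x := by
    intro x
    let fr : F →ₐ[ZMod 5] F :=
      { frobenius F 5 with commutes' := fun c => by simpa [frobenius_def] using hcomm c }
    have hfrinj : Function.Injective fr := fun a b h => frobenius_inj F 5 h
    have hfrbij : Function.Bijective fr := Finite.injective_iff_bijective.mp hfrinj
    have h := Algebra.trace_eq_of_algEquiv (AlgEquiv.ofBijective fr hfrbij) x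
    have hex : (AlgEquiv.ofBijective fr hfrbij) x = x^5 := rfl
    rw [hex] at h
    exact h
  -- finrank and basic trace values
  have hrank : Module.finrank (ZMod 5) F = 4 := by
    have h := Module.card_eq_pow_finrank (K := ZMod 5) (V := F)
    rw [ZMod.card, hF] at h
    have h' : (5:ℕ) ^ Module.finrank (ZMod 5) F = 5 ^ 4 := by rw [← h]; norm_num
    exact Nat.pow_right_injective (by norm_num) h'
  have hTφ : ∀ c : ZMod 5, T (algebraMap (ZMod 5) F c) = 4 * c := by
    intro c
    rw [hT, Algebra.trace_algebraMap, hrank]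
    push_cast
    ring
  have hTmul : ∀ (c : ZMod 5) (x : F), T (algebraMap (ZMod 5) F c * x) = c * T x := by
    intro c x
    rw [← Algebra.smul_def, map_smul, smul_eq_mul]
  have hz : (5 : ZMod 5) = 0 := by rfl
  have hTr1 : T r = 0 := by
    have h := htr5 r
    rw [hr5, hTmul] at h
    rcases hu₀or with h2 | h3
    · rw [h2] at h; linear_combination h
    · rw [h3] at h; linear_combination 3 * h - T r * hz
  have hTr2 : T (r^2) = 0 := by
    have h := htr5 (r^2)
    rw [← pow_mul, show (2*5 : ℕ) = 10 from rfl, hr10, map_neg] at h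
    linear_combination 2 * h + T (r^2) * hz
  have hTr3 : T (r^3) = 0 := by
    have h := htr5 (r^3)
    rw [← pow_mul, show (3*5 : ℕ) = 15 from rfl, hr15, neg_mul, map_neg, hTmul] at h
    rcases hu₀or with h2 | h3
    · rw [h2] at h; linear_combination 3 * h + 2 * T (r^3) * hz
    · rw [h3] at h; linear_combination h + T (r^3) * hz
  -- Frobenius step for linear independence
  have hfrob : ∀ x y : F, (x + y)^5 = x^5 + y^5 := fun x y => add_pow_char x y 5
  have step : ∀ x0 x1 x2 x3 : ZMod 5,
      algebraMap (ZMod 5) F x0 + algebraMap (ZMod 5) F x1 * r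
        + algebraMap (ZMod 5) F x2 * r^2 + algebraMap (ZMod 5) F x3 * r^3 = 0 →
      algebraMap (ZMod 5) F x0 + algebraMap (ZMod 5) F (u₀*x1) * r
        + algebraMap (ZMod 5) F (-x2) * r^2 + algebraMap (ZMod 5) F (-(u₀*x3)) * r^3 = 0 := by
    intro x0 x1 x2 x3 h
    have q := congrArg (fun z : F => z^5) h
    simp only [hfrob, mul_pow, ← pow_mul, hcomm] at q
    norm_num at q
    rw [hr5, hr10, hr15] at q
    rw [map_mul, map_neg, map_neg, map_mul]
    linear_combination q
  set mm : (Fin 4 → ZMod 5) → F := fun v =>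
    algebraMap (ZMod 5) F (v 0) + algebraMap (ZMod 5) F (v 1) * r
      + algebraMap (ZMod 5) F (v 2) * r^2 + algebraMap (ZMod 5) F (v 3) * r^3 with hmm
  have h4F : (4:F) ≠ 0 := by
    intro h
    have : (1:F) = 0 := by linear_combination h5F - h
    exact one_ne_zero this
  have hminj : Function.Injective mm := by
    intro v v' hvv
    rw [hmm] at hvv
    simp only at hvv
    have E0 : algebraMap (ZMod 5) F (v 0 - v' 0) + algebraMap (ZMod 5) F (v 1 - v' 1) * r
        + algebraMap (ZMod 5) F (v 2 - v' 2) * r^2 + algebraMap (ZMod 5) F (v 3 - v' 3) * r^3 = 0 := by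
      simp only [map_sub]
      linear_combination hvv
    have E1 := step _ _ _ _ E0
    have E2 := step _ _ _ _ E1
    have E3 := step _ _ _ _ E2
    simp only [map_mul, map_neg] at E1 E2 E3
    have hc0 : algebraMap (ZMod 5) F (v 0 - v' 0) * 4 = 0 := by
      linear_combination E0 + E1 + E2 + E3
        - ((1 + algebraMap (ZMod 5) F u₀) * algebraMap (ZMod 5) F (v 1 - v' 1) * r
           + (1 - algebraMap (ZMod 5) F u₀) * algebraMap (ZMod 5) F (v 3 - v' 3) * r^3) * huF
    have hc1 : algebraMap (ZMod 5) F (v 1 - v' 1) * (r * 4) = 0 := by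
      linear_combination E0 - algebraMap (ZMod 5) F u₀ * E1 - E2 + algebraMap (ZMod 5) F u₀ * E3
        - (((algebraMap (ZMod 5) F u₀)^2 - 3) * algebraMap (ZMod 5) F (v 1 - v' 1) * r
           - ((algebraMap (ZMod 5) F u₀)^2 - 1) * algebraMap (ZMod 5) F (v 3 - v' 3) * r^3) * huF
    have hc2 : algebraMap (ZMod 5) F (v 2 - v' 2) * (r^2 * 4) = 0 := by
      linear_combination E0 - E1 + E2 - E3
        - ((1 - algebraMap (ZMod 5) F u₀) * algebraMap (ZMod 5) F (v 1 - v' 1) * r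
           + (1 + algebraMap (ZMod 5) F u₀) * algebraMap (ZMod 5) F (v 3 - v' 3) * r^3) * huF
    have hc3 : algebraMap (ZMod 5) F (v 3 - v' 3) * (r^3 * 4) = 0 := by
      linear_combination E0 + algebraMap (ZMod 5) F u₀ * E1 - E2 - algebraMap (ZMod 5) F u₀ * E3
        + (((algebraMap (ZMod 5) F u₀)^2 - 1) * algebraMap (ZMod 5) F (v 1 - v' 1) * r
           - ((algebraMap (ZMod 5) F u₀)^2 - 3) * algebraMap (ZMod 5) F (v 3 - v' 3) * r^3) * huF
    have hres : ∀ i : Fin 4, algebraMap (ZMod 5) F (v i - v' i) = 0 → v i = v' i := by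
      intro i h
      have h0 : v i - v' i = 0 := hφinj (by rw [h, map_zero])
      exact sub_eq_zero.mp h0
    funext i
    fin_cases i
    · exact hres 0 ((mul_eq_zero.mp hc0).resolve_right h4F)
    · exact hres 1 ((mul_eq_zero.mp hc1).resolve_right (mul_ne_zero hrne h4F))
    · exact hres 2 ((mul_eq_zero.mp hc2).resolve_right
        (mul_ne_zero (pow_ne_zero 2 hrne) h4F))
    · exact hres 3 ((mul_eq_zero.mp hc3).resolve_right
        (mul_ne_zero (pow_ne_zero 3 hrne) h4F))
  -- the cube/trace formula
  have key : ∀ v : Fin 4 → ZMod 5, T ((mm v)^3) = Pc u₀ v := by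
    intro v
    have hc : (mm v)^3 =
        algebraMap (ZMod 5) F ((v 0)^3 + u₀*(6*(v 0)*(v 1)*(v 3) + 3*(v 0)*(v 2)^2
            + 3*(v 1)^2*(v 2)) + u₀^2*(3*(v 2)*(v 3)^2))
        + algebraMap (ZMod 5) F (3*(v 0)^2*(v 1) + u₀*(6*(v 0)*(v 2)*(v 3) + 3*(v 1)^2*(v 3)
            + 3*(v 1)*(v 2)^2) + u₀^2*((v 3)^3)) * r
        + algebraMap (ZMod 5) F (3*(v 0)^2*(v 2) + 3*(v 0)*(v 1)^2 + u₀*(3*(v 0)*(v 3)^2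
            + 6*(v 1)*(v 2)*(v 3) + (v 2)^3)) * r^2
        + algebraMap (ZMod 5) F (3*(v 0)^2*(v 3) + 6*(v 0)*(v 1)*(v 2) + (v 1)^3
            + u₀*(3*(v 1)*(v 3)^2 + 3*(v 2)^2*(v 3))) * r^3 := by
      rw [hmm]
      simp only [map_add, map_mul, map_pow, map_ofNat]
      linear_combination ((6*algebraMap (ZMod 5) F (v 0)*algebraMap (ZMod 5) F (v 1)*algebraMap (ZMod 5) F (v 3)
          + 3*algebraMap (ZMod 5) F (v 0)*(algebraMap (ZMod 5) F (v 2))^2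
          + 3*(algebraMap (ZMod 5) F (v 1))^2*algebraMap (ZMod 5) F (v 2))
        + (6*algebraMap (ZMod 5) F (v 0)*algebraMap (ZMod 5) F (v 2)*algebraMap (ZMod 5) F (v 3)
          + 3*(algebraMap (ZMod 5) F (v 1))^2*algebraMap (ZMod 5) F (v 3)
          + 3*algebraMap (ZMod 5) F (v 1)*(algebraMap (ZMod 5) F (v 2))^2) * r
        + (3*algebraMap (ZMod 5) F (v 0)*(algebraMap (ZMod 5) F (v 3))^2
          + 6*algebraMap (ZMod 5) F (v 1)*algebraMap (ZMod 5) F (v 2)*algebraMap (ZMod 5) F (v 3)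
          + (algebraMap (ZMod 5) F (v 2))^3) * r^2
        + (3*algebraMap (ZMod 5) F (v 1)*(algebraMap (ZMod 5) F (v 3))^2
          + 3*(algebraMap (ZMod 5) F (v 2))^2*algebraMap (ZMod 5) F (v 3)) * r^3
        + (3*algebraMap (ZMod 5) F (v 2)*(algebraMap (ZMod 5) F (v 3))^2
          + (algebraMap (ZMod 5) F (v 3))^3 * r) * (r^4 + algebraMap (ZMod 5) F u₀)) * hu
    rw [hc, map_add, map_add, map_add, hTmul, hTmul, hTmul, hTφ, hTr1, hTr2, hTr3, Pc]
    ring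
  -- rewrite the summand
  have hterm : ∀ y ∈ Finset.range 624,
      (zet ^ (T (((g:F) + 1) * (g:F) ^ (3 * y) + (g:F) * (g:F) ^ (2 * y) + (g:F) ^ y)).val) *
        (starRingEnd ℂ) (zet ^ (T ((g:F) * (g:F) ^ (3 * y) + (g:F) * (g:F) ^ (2 * y) + (g:F) ^ y)).val)
      = zet ^ (T (((g:F) ^ y)^3)).val := by
    intro y _
    rw [mul_conj_zet]
    have hd : T (((g:F) + 1) * (g:F) ^ (3 * y) + (g:F) * (g:F) ^ (2 * y) + (g:F) ^ y)
        - T ((g:F) * (g:F) ^ (3 * y) + (g:F) * (g:F) ^ (2 * y) + (g:F) ^ y)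
        = T (((g:F) ^ y)^3) := by
      rw [← map_sub]
      congr 1
      rw [← pow_mul']
      ring
    rw [hd]
  -- compute the full-field sum
  have hmbij : Function.Bijective mm := by
    rw [Fintype.bijective_iff_injective_and_card]
    refine ⟨hminj, ?_⟩
    rw [Fintype.card_fun, ZMod.card, Fintype.card_fin, hF]
    norm_num
  have hsum3 : ∑ x : F, zet ^ (T (x^3)).val = -50 := by
    rw [← Function.Bijective.sum_comp hmbij (fun x => zet ^ (T (x^3)).val)]
    have h1 : ∀ v : Fin 4 → ZMod 5,
        zet ^ (T ((mm v)^3)).val = zet ^ (Pc u₀ v).val := by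
      intro v; rw [key v]
    rw [Finset.sum_congr rfl (fun v _ => h1 v)]
    rw [← Finset.sum_fiberwise Finset.univ (fun v => Pc u₀ v) (fun v => zet ^ (Pc u₀ v).val)]
    have h2 : ∀ t : ZMod 5,
        (∑ v ∈ Finset.univ.filter (fun v => Pc u₀ v = t), zet ^ (Pc u₀ v).val)
          = ((Finset.univ.filter (fun v : Fin 4 → ZMod 5 => Pc u₀ v = t)).card : ℂ) * zet ^ t.val := by
      intro t
      rw [Finset.sum_congr rfl (fun v hv => by rw [(Finset.mem_filter.mp hv).2]),
        Finset.sum_const, nsmul_eq_mul]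
    rw [Finset.sum_congr rfl (fun t _ => h2 t)]
    have hcards : ∀ t : ZMod 5,
        (Finset.univ.filter (fun v : Fin 4 → ZMod 5 => Pc u₀ v = t)).card
          = if t = 0 then 85 else 135 := by
      rcases hu₀or with h | h
      · rw [h]; exact count2
      · rw [h]; exact count3
    have hne : ∀ n : ZMod 5, n.val ≠ 0 → n ≠ 0 := fun n h hn => h (by rw [hn]; rfl)
    have c0 := hcards 0; rw [if_pos rfl] at c0
    have c1 := hcards 1
    rw [if_neg (hne 1 (by rw [show (1:ZMod 5).val = 1 from rfl]; norm_num))] at c1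
    have c2 := hcards 2
    rw [if_neg (hne 2 (by rw [show (2:ZMod 5).val = 2 from rfl]; norm_num))] at c2
    have c3 := hcards 3
    rw [if_neg (hne 3 (by rw [show (3:ZMod 5).val = 3 from rfl]; norm_num))] at c3
    have c4 := hcards 4
    rw [if_neg (hne 4 (by rw [show (4:ZMod 5).val = 4 from rfl]; norm_num))] at c4
    rw [zmod5_sum (fun t => ((Finset.univ.filter
      (fun v : Fin 4 → ZMod 5 => Pc u₀ v = t)).card : ℂ) * zet ^ t.val)]
    rw [c0, c1, c2, c3, c4]
    simp only [show (0:ZMod 5).val = 0 from rfl, show (1:ZMod 5).val = 1 from rfl,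
      show (2:ZMod 5).val = 2 from rfl, show (3:ZMod 5).val = 3 from rfl,
      show (4:ZMod 5).val = 4 from rfl]
    push_cast
    linear_combination (135:ℂ) * zet_sum
  -- reindex over nonzero elements
  have hsum2 : ∑ y ∈ Finset.range 624, zet ^ (T (((g:F) ^ y)^3)).val
      = ∑ x ∈ (Finset.univ : Finset F).erase 0, zet ^ (T (x^3)).val := by
    apply Finset.sum_bij (fun (y : ℕ) (_ : y ∈ Finset.range 624) => (g:F)^y)
    · intro y _
      exact Finset.mem_erase.mpr ⟨pow_ne_zero y (Units.ne_zero g), Finset.mem_univ _⟩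
    · intro y1 h1 y2 h2 heq
      have hu1 : (g ^ y1 : Fˣ) = g ^ y2 := by
        apply Units.ext
        rw [Units.val_pow_eq_pow_val, Units.val_pow_eq_pow_val]
        exact heq
      refine pow_injOn_Iio_orderOf ?_ ?_ hu1
      · rw [horder]; exact Finset.mem_range.mp h1
      · rw [horder]; exact Finset.mem_range.mp h2
    · intro x hx
      obtain ⟨hxne, -⟩ := Finset.mem_erase.mp hx
      obtain ⟨k, hk⟩ := Subgroup.mem_zpowers_iff.mp (hg (Units.mk0 x hxne))
      have h1 : 0 ≤ k % 624 := Int.emod_nonneg k (by norm_num)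
      have h2 : k % 624 < 624 := Int.emod_lt_of_pos k (by norm_num)
      refine ⟨(k % 624).toNat, Finset.mem_range.mpr (by omega), ?_⟩
      have h624z : g ^ (624:ℤ) = 1 := by
        rw [show (624:ℤ) = ((624:ℕ):ℤ) from by norm_num, zpow_natCast]
        exact h624
      have hgk : g ^ ((k % 624).toNat) = Units.mk0 x hxne := by
        rw [← zpow_natCast, Int.toNat_of_nonneg h1, ← zpow_eq_zpow_emod k h624z]
        exact hk
      rw [← Units.val_pow_eq_pow_val, hgk, Units.val_mk0]
    · intro y _
      rfl
  have hsub : ∑ x ∈ (Finset.univ : Finset F).erase 0, zet ^ (T (x^3)).val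
      = (∑ x : F, zet ^ (T (x^3)).val) - 1 := by
    rw [Finset.sum_erase_eq_sub (Finset.mem_univ (0:F))]
    congr 1
    rw [show ((0:F)^3) = 0 from by ring, map_zero]
    simp
  calc ∑ y ∈ Finset.range 624,
        (Complex.exp (2 * Real.pi * Complex.I / 5) ^
            (T (((g : F) + 1) * (g : F) ^ (3 * y) + (g : F) * (g : F) ^ (2 * y) + (g : F) ^ y)).val) *
          (starRingEnd ℂ) (Complex.exp (2 * Real.pi * Complex.I / 5) ^
            (T ((g : F) * (g : F) ^ (3 * y) + (g : F) * (g : F) ^ (2 * y) + (g : F) ^ y)).val)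
      = ∑ y ∈ Finset.range 624, zet ^ (T (((g:F) ^ y)^3)).val := Finset.sum_congr rfl hterm
    _ = (∑ x : F, zet ^ (T (x^3)).val) - 1 := by rw [hsum2, hsub]
    _ = -51 := by rw [hsum3]; norm_num
end
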